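/- arXiv:2505.01416 — 6 statements merged into one kernel-verified Lean document; each statement's English description precedes it below -/
import Mathlib

section
/- Let I = P_{i,2} be the cut ideal of the complete graph K_i and, for each j, let I_{i,j} denote the j-fold lcm-ideal of I. Then for every k with 1 ≤ k ≤ i−1, one has I_{i,2^{k−1}} = I_{i,2^{k−1}+1} = ⋯ = I_{i,2^k−1} = P_{i,k+1}, where P_{i,k+1} is the ideal generated by the cut monomials of all (k+1)-partitions of {1,…,i}. -/
open MvPolynomial Finset

noncomputable section
open scoped Classical

variable {σ : Type*}

/-- The ideal generated by the monomials `x^μ`, `μ ∈ S`. -/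
def monIdeal (K : Type*) [Field K] {σ : Type*} (S : Finset (σ →₀ ℕ)) :
    Ideal (MvPolynomial σ K) :=
  Ideal.span ((fun μ => (monomial μ 1 : MvPolynomial σ K)) '' ↑S)

/-- The minimal elements of a finite set of exponent vectors; these are the exponents of
the minimal monomial generating set of the monomial ideal generated by `S`. -/
def minGen {σ : Type*} (S : Finset (σ →₀ ℕ)) : Finset (σ →₀ ℕ) :=
  S.filter fun μ => ∀ ν ∈ S, ν ≤ μ → ν = μ

/-- Exponents of lcm's of pairs of distinct monomials with exponents in `S`
(the lcm of `x^μ` and `x^ν` is `x^(μ ⊔ ν)`). -/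
def pairLcms {σ : Type*} (S : Finset (σ →₀ ℕ)) : Finset (σ →₀ ℕ) :=
  ((S ×ˢ S).filter fun p => p.1 ≠ p.2).image fun p => p.1 ⊔ p.2

/-- Generating exponents of the stepwise lcm-filtration: `stepGens S k` generates `Ī_{k+1}`,
where `Ī_1` is generated by `S` and `Ī_{k+1}` is generated by the lcm's of pairs of distinct
elements of the minimal monomial generating set of `Ī_k`. -/
def stepGens {σ : Type*} (S : Finset (σ →₀ ℕ)) : ℕ → Finset (σ →₀ ℕ)
  | 0 => S
  | k + 1 => pairLcms (minGen (stepGens S k))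

/-- `Ī_k`, the `k`-th step (`k ≥ 1`) of the stepwise lcm-filtration of the monomial ideal
generated by the monomials with exponents in `S`. -/
def stepIdeal (K : Type*) [Field K] {σ : Type*} (S : Finset (σ →₀ ℕ)) (k : ℕ) :
    Ideal (MvPolynomial σ K) :=
  monIdeal K (stepGens S (k - 1))

/-- Exponents of the lcm's of all `k`-element subsets of `S`. -/
def lcmFoldGens {σ : Type*} (S : Finset (σ →₀ ℕ)) (k : ℕ) : Finset (σ →₀ ℕ) :=
  (S.powersetCard k).image fun T => T.sup id

/-- The `k`-fold lcm-ideal `I_k` of the monomial ideal whose minimal monomial generating set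
has exponents `S`. -/
def lcmFoldIdeal (K : Type*) [Field K] {σ : Type*} (S : Finset (σ →₀ ℕ)) (k : ℕ) :
    Ideal (MvPolynomial σ K) :=
  monIdeal K (lcmFoldGens S k)

/-- The edges of the complete graph `K_i` on vertex set `Fin i`. -/
abbrev Edge (i : ℕ) := {e : Sym2 (Fin i) // ¬ e.IsDiag}

/-- An edge `e` of `K_i` crosses the partition `P` if no part of `P` contains both of its
endpoints. -/
def crosses {i : ℕ} (P : Finpartition (univ : Finset (Fin i))) (e : Sym2 (Fin i)) : Prop :=
  ¬ ∃ t ∈ P.parts, ∀ v ∈ e, v ∈ t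

/-- `E(C)`: the set of edges of `K_i` whose endpoints lie in different parts of `P`. -/
def cutEdges {i : ℕ} (P : Finpartition (univ : Finset (Fin i))) : Finset (Edge i) :=
  univ.filter fun e => crosses P e.val

/-- The exponent vector of the cut monomial `m_C = ∏_{e ∈ E(C)} x_e` of the partition `P`. -/
def cutExp {i : ℕ} (P : Finpartition (univ : Finset (Fin i))) : Edge i →₀ ℕ :=
  ∑ e ∈ cutEdges P, Finsupp.single e 1

/-- The cut monomial `m_C = ∏_{e ∈ E(C)} x_e` of the partition `P`, with respect to `K_i`. -/
def cutMon (K : Type*) [Field K] {i : ℕ} (P : Finpartition (univ : Finset (Fin i))) :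
    MvPolynomial (Edge i) K := monomial (cutExp P) 1

instance {i : ℕ} : Finite (Finpartition (univ : Finset (Fin i))) :=
  Finite.of_injective Finpartition.parts fun a b h => Finpartition.ext (by simp [h])

/-- The exponents of the cut monomials of all `j`-partitions of the vertex set of `K_i`. -/
def cutGens (i j : ℕ) : Finset (Edge i →₀ ℕ) :=
  ((Set.toFinite {P : Finpartition (univ : Finset (Fin i)) | P.parts.card = j}).image
    cutExp).toFinset

/-- `P_{i,j}`: the ideal generated by the cut monomials of all `j`-partitions of the vertex
set of `K_i` (for the complete graph every `j`-partition is a `j`-cut). -/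
def Pij (K : Type*) [Field K] (i j : ℕ) : Ideal (MvPolynomial (Edge i) K) :=
  monIdeal K (cutGens i j)

namespace CutProofAux

variable {i : ℕ}

lemma monIdeal_le {K : Type*} [Field K] {σ : Type*} (S S' : Finset (σ →₀ ℕ))
    (h : ∀ μ ∈ S, ∃ ν ∈ S', ν ≤ μ) : monIdeal K S ≤ monIdeal K S' := by
  rw [monIdeal, Ideal.span_le]
  rintro x ⟨μ, hμ, rfl⟩
  obtain ⟨ν, hν, hle⟩ := h μ (by exact_mod_cast hμ)
  have heq : (monomial μ 1 : MvPolynomial σ K) = monomial (μ - ν) 1 * monomial ν 1 := by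
    rw [monomial_mul, one_mul, tsub_add_cancel_of_le hle]
  rw [SetLike.mem_coe]
  show (monomial μ 1 : MvPolynomial σ K) ∈ monIdeal K S'
  rw [heq]
  exact Ideal.mul_mem_left _ _ (Ideal.subset_span ⟨ν, by simpa using hν, rfl⟩)

lemma mem_part_iff (P : Finpartition (univ : Finset (Fin i))) (u v : Fin i) :
    u ∈ P.part v ↔ P.part u = P.part v :=
  P.mem_part_iff_part_eq_part (mem_univ u) (mem_univ v)

lemma crosses_mk_iff (P : Finpartition (univ : Finset (Fin i))) (u v : Fin i) :
    crosses P s(u, v) ↔ P.part u ≠ P.part v := by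
  unfold crosses
  constructor
  · intro h hne
    refine h ⟨P.part v, P.part_mem.2 (mem_univ v), ?_⟩
    intro w hw
    rw [Sym2.mem_iff] at hw
    rcases hw with rfl | rfl
    · rw [← hne]; exact P.mem_part (mem_univ w)
    · exact P.mem_part (mem_univ w)
  · rintro hne ⟨t, ht, hall⟩
    have hu := hall u (by simp)
    have hv := hall v (by simp)
    exact hne ((P.part_eq_of_mem ht hu).trans (P.part_eq_of_mem ht hv).symm)

lemma mem_cutEdges (P : Finpartition (univ : Finset (Fin i))) (e : Edge i) :
    e ∈ cutEdges P ↔ crosses P e.val := by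
  simp [cutEdges]

lemma edge_exists_rep (e : Edge i) : ∃ u v : Fin i, u ≠ v ∧ e.val = s(u, v) := by
  obtain ⟨e, he⟩ := e
  induction e using Sym2.inductionOn with
  | _ u v => exact ⟨u, v, fun h => he (by simp [h]), rfl⟩

lemma cutExp_apply (P : Finpartition (univ : Finset (Fin i))) (e : Edge i) :
    cutExp P e = if e ∈ cutEdges P then 1 else 0 := by
  classical
  rw [cutExp, Finsupp.finset_sum_apply]
  simp [Finsupp.single_apply]

lemma cutExp_le_of_subset {P Q : Finpartition (univ : Finset (Fin i))}
    (h : cutEdges P ⊆ cutEdges Q) : cutExp P ≤ cutExp Q := by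
  rw [Finsupp.le_def]
  intro e
  rw [cutExp_apply, cutExp_apply]
  split_ifs with h1 h2
  · exact le_refl 1
  · exact absurd (h h1) h2
  · exact Nat.zero_le _
  · exact le_refl 0

lemma mem_cutGens {μ : Edge i →₀ ℕ} {j : ℕ} :
    μ ∈ cutGens i j ↔
      ∃ P : Finpartition (univ : Finset (Fin i)), P.parts.card = j ∧ cutExp P = μ := by
  simp [cutGens]

lemma parts_eq_image (P : Finpartition (univ : Finset (Fin i))) :
    P.parts = univ.image P.part := by
  ext t
  simp only [mem_image, mem_univ, true_and]
  constructor
  · intro ht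
    obtain ⟨v, hv⟩ := P.nonempty_of_mem_parts ht
    exact ⟨v, P.part_eq_of_mem ht hv⟩
  · rintro ⟨v, rfl⟩
    exact P.part_mem.2 (mem_univ v)

lemma part_funext (P P' : Finpartition (univ : Finset (Fin i)))
    (h : ∀ u, P.part u = P'.part u) : P = P' := by
  apply Finpartition.ext
  rw [parts_eq_image, parts_eq_image]
  exact Finset.image_congr (fun u _ => h u)

/-- fiber partition of a function -/
def fiberPart {β : Type*} (f : Fin i → β) : Finpartition (univ : Finset (Fin i)) :=
  Finpartition.ofSetoid (Setoid.ker f)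

lemma fiberPart_part_eq_iff {β : Type*} (f : Fin i → β) (u v : Fin i) :
    (fiberPart f).part u = (fiberPart f).part v ↔ f u = f v := by
  rw [← mem_part_iff, fiberPart, Finpartition.mem_part_ofSetoid_iff_rel]
  exact ⟨fun h => h.symm, fun h => h.symm⟩

lemma fiberPart_parts_card {β : Type*} (f : Fin i → β) :
    (fiberPart f).parts.card = (univ.image f).card := by
  classical
  have hparts : (fiberPart f).parts
      = (univ.image f).image (fun c => univ.filter fun b => c = f b) := by
    rw [Finset.image_image]
    rfl
  rw [hparts]
  apply Finset.card_image_of_injOn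
  rintro c hc c' hc' hsame
  simp only [coe_image, Set.mem_image] at hc hc'
  obtain ⟨a, _, rfl⟩ := hc
  obtain ⟨a', _, rfl⟩ := hc'
  have hsame' : (univ.filter fun b => f a = f b) = univ.filter fun b => f a' = f b := hsame
  have : a ∈ univ.filter fun b => f a = f b := by simp
  rw [hsame'] at this
  exact ((Finset.mem_filter.1 this).2).symm

lemma two_part_eq (P : Finpartition (univ : Finset (Fin i))) (h2 : P.parts.card = 2)
    {v u w : Fin i} (hu : u ∉ P.part v) (hw : w ∉ P.part v) : w ∈ P.part u := by
  have hne : P.part u ≠ P.part v := fun h => hu (h ▸ P.mem_part (mem_univ u))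
  have hsub : ({P.part v, P.part u} : Finset _) ⊆ P.parts := by
    intro t ht
    rw [mem_insert, mem_singleton] at ht
    rcases ht with rfl | rfl
    exacts [P.part_mem.2 (mem_univ v), P.part_mem.2 (mem_univ u)]
  have hcard : ({P.part v, P.part u} : Finset _).card = 2 := by
    rw [card_insert_of_notMem (by simpa using hne.symm), card_singleton]
  have hparts : P.parts = {P.part v, P.part u} :=
    (Finset.eq_of_subset_of_card_le hsub (by omega)).symm
  have hwmem : P.part w ∈ P.parts := P.part_mem.2 (mem_univ w)
  rw [hparts, mem_insert, mem_singleton] at hwmem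
  rcases hwmem with h | h
  · exact absurd (h ▸ P.mem_part (mem_univ w)) hw
  · exact h ▸ P.mem_part (mem_univ w)

lemma two_part_eq_sdiff (P : Finpartition (univ : Finset (Fin i))) (h2 : P.parts.card = 2)
    {v u : Fin i} (hu : u ∉ P.part v) : P.part u = univ \ P.part v := by
  ext w
  simp only [mem_sdiff, mem_univ, true_and]
  constructor
  · intro hw hwv
    have h1 : P.part w = P.part u := (mem_part_iff P w u).1 hw
    have h2' : P.part w = P.part v := (mem_part_iff P w v).1 hwv
    exact hu ((h1.symm.trans h2') ▸ P.mem_part (mem_univ u))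
  · exact fun hw => two_part_eq P h2 hu hw

lemma two_part_ext (P P' : Finpartition (univ : Finset (Fin i))) (h2 : P.parts.card = 2)
    (h2' : P'.parts.card = 2) (v : Fin i) (h : P.part v = P'.part v) : P = P' := by
  apply part_funext
  intro u
  by_cases hu : u ∈ P.part v
  · have hu' : u ∈ P'.part v := h ▸ hu
    rw [(mem_part_iff P u v).1 hu, (mem_part_iff P' u v).1 hu', h]
  · have hu' : u ∉ P'.part v := h ▸ hu
    rw [two_part_eq_sdiff P h2 hu, two_part_eq_sdiff P' h2' hu', h]

noncomputable instance : Fintype (Finpartition (univ : Finset (Fin i))) :=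
  Fintype.ofFinite _

lemma dir1 (K : Type*) [Field K] (i k m : ℕ) (hk : 1 ≤ k) (hki : k ≤ i - 1)
    (hm1 : 2 ^ (k - 1) ≤ m) :
    lcmFoldIdeal K (cutGens i 2) m ≤ Pij K i (k + 1) := by
  have hi : 2 ≤ i := by
    rcases i with _ | _ | i <;> omega
  apply monIdeal_le
  intro μ hμ
  simp only [lcmFoldGens, Finset.mem_image, Finset.mem_powersetCard] at hμ
  obtain ⟨T, ⟨hTsub, hTcard⟩, rfl⟩ := hμ
  set Ps := univ.filter
      (fun P : Finpartition (univ : Finset (Fin i)) => P.parts.card = 2 ∧ cutExp P ∈ T)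
    with hPs
  have hmemPs : ∀ P : Finpartition (univ : Finset (Fin i)),
      P ∈ Ps ↔ P.parts.card = 2 ∧ cutExp P ∈ T := by
    intro P; simp [hPs]
  -- |T| ≤ |Ps|
  have hcard : m ≤ Ps.card := by
    rw [← hTcard]
    apply Finset.card_le_card_of_surjOn cutExp
    intro μ' hμ'
    obtain ⟨P, hP2, hPe⟩ := mem_cutGens.1 (hTsub hμ')
    refine ⟨P, ?_, hPe⟩
    rw [Finset.mem_coe, hmemPs]
    exact ⟨hP2, by rw [hPe]; exact Finset.mem_coe.1 hμ'⟩
  -- the common refinement data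
  set f : Fin i → ({x // x ∈ Ps} → Finset (Fin i)) := fun v P => P.1.part v with hf
  have hsat : ∀ P ∈ Ps, ∀ u v : Fin i, f u = f v → P.part u = P.part v :=
    fun P hP u v h => congrFun h ⟨P, hP⟩
  set B := univ.image f with hB
  set v₀ : Fin i := ⟨0, by omega⟩
  set b₀ := f v₀ with hb₀
  have hb₀B : b₀ ∈ B := mem_image_of_mem f (mem_univ v₀)
  -- the injection P ↦ ((P.part v₀).image f).erase b₀
  have hΦb₀ : ∀ P : Finpartition (univ : Finset (Fin i)), b₀ ∈ (P.part v₀).image f :=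
    fun P => mem_image_of_mem f (P.mem_part (mem_univ v₀))
  have hΦrec : ∀ P ∈ Ps, ∀ v : Fin i, v ∈ P.part v₀ ↔ f v ∈ (P.part v₀).image f := by
    intro P hP v
    constructor
    · exact fun h => mem_image_of_mem f h
    · intro h
      obtain ⟨w, hw, hwv⟩ := mem_image.1 h
      have := hsat P hP w v hwv
      rw [mem_part_iff] at hw ⊢
      rw [← this]; exact hw
  have hΦinj : Set.InjOn (fun P : Finpartition (univ : Finset (Fin i)) =>
      ((P.part v₀).image f).erase b₀) Ps := by
    intro P hP P' hP' heq
    simp only at heq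
    have hfull : (P.part v₀).image f = (P'.part v₀).image f := by
      rw [← Finset.insert_erase (hΦb₀ P), ← Finset.insert_erase (hΦb₀ P'), heq]
    have hpart : P.part v₀ = P'.part v₀ := by
      ext v
      rw [hΦrec P hP v, hΦrec P' hP' v, hfull]
    exact two_part_ext P P' ((hmemPs P).1 hP).1 ((hmemPs P').1 hP').1 v₀ hpart
  have hΦmem : ∀ P ∈ Ps, ((P.part v₀).image f).erase b₀
      ∈ ((B.erase b₀).powerset).erase (B.erase b₀) := by
    intro P hP
    have hsub : (P.part v₀).image f ⊆ B :=
      Finset.image_subset_image (Finset.subset_univ _)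
    rw [mem_erase, mem_powerset]
    constructor
    · -- the erased image is not all of B.erase b₀
      intro hcon
      have hfull : (P.part v₀).image f = B := by
        apply Finset.Subset.antisymm hsub
        intro b hb
        by_cases hbb : b = b₀
        · exact hbb ▸ hΦb₀ P
        · have : b ∈ B.erase b₀ := mem_erase.2 ⟨hbb, hb⟩
          rw [← hcon] at this
          exact Finset.erase_subset _ _ this
      have hall : P.part v₀ = univ := by
        apply Finset.eq_univ_of_forall
        intro v
        rw [hΦrec P hP v, hfull]
        exact mem_image_of_mem f (mem_univ v)
      -- contradiction with 2 parts
      have h2 := ((hmemPs P).1 hP).1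
      have hlt : 1 < P.parts.card := by omega
      obtain ⟨t, ht, t', ht', htt⟩ := Finset.one_lt_card.1 hlt
      have hv₀t : P.part v₀ ∈ P.parts := P.part_mem.2 (mem_univ v₀)
      have : t = P.part v₀ ∨ t' = P.part v₀ → False := by
        intro hcase
        rcases hcase with h | h
        · obtain ⟨w, hw⟩ := P.nonempty_of_mem_parts ht'
          have hwall : w ∈ P.part v₀ := by rw [hall]; exact mem_univ w
          exact htt ((P.eq_of_mem_parts ht' hv₀t hw hwall).trans h.symm).symm
        · obtain ⟨w, hw⟩ := P.nonempty_of_mem_parts ht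
          have hwall : w ∈ P.part v₀ := by rw [hall]; exact mem_univ w
          exact htt ((P.eq_of_mem_parts ht hv₀t hw hwall).trans h.symm)
      apply this
      by_cases hcase : t = P.part v₀
      · exact Or.inl hcase
      · left
        obtain ⟨w, hw⟩ := P.nonempty_of_mem_parts ht
        have hwall : w ∈ P.part v₀ := by rw [hall]; exact mem_univ w
        exact P.eq_of_mem_parts ht hv₀t hw hwall
    · exact fun b hb => mem_erase.2 ⟨(mem_erase.1 hb).1, hsub (mem_erase.1 hb).2⟩
  have hcount : Ps.card ≤ 2 ^ (B.card - 1) - 1 := by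
    have h1 : Ps.card ≤ (((B.erase b₀).powerset).erase (B.erase b₀)).card :=
      Finset.card_le_card_of_injOn _ hΦmem hΦinj
    have h2 : (((B.erase b₀).powerset).erase (B.erase b₀)).card
        = 2 ^ (B.card - 1) - 1 := by
      rw [Finset.card_erase_of_mem (Finset.mem_powerset_self _), Finset.card_powerset,
        Finset.card_erase_of_mem hb₀B]
    omega
  -- conclude B.card ≥ k + 1
  have hrB : k + 1 ≤ B.card := by
    have hB1 : 1 ≤ B.card := Finset.card_pos.2 ⟨b₀, hb₀B⟩
    have : 2 ^ (k - 1) < 2 ^ (B.card - 1) := by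
      have h1 : 1 ≤ 2 ^ (B.card - 1) := Nat.one_le_two_pow
      omega
    have := (Nat.pow_lt_pow_iff_right (by norm_num : 1 < 2)).1 this
    omega
  -- build the (k+1)-part coarsening
  set r := B.card with hr
  set eB := B.equivFin with heB
  set g : Fin i → Fin (k + 1) := fun v =>
    ⟨(eB ⟨f v, mem_image_of_mem f (mem_univ v)⟩ : ℕ) % (k + 1),
      Nat.mod_lt _ (by omega)⟩ with hg
  have hgresp : ∀ u v : Fin i, f u = f v → g u = g v := by
    intro u v h
    have hsub : (⟨f u, mem_image_of_mem f (mem_univ u)⟩ : {x // x ∈ B})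
        = ⟨f v, mem_image_of_mem f (mem_univ v)⟩ := Subtype.ext h
    simp only [hg, hsub]
  have hgsurj : ∀ t : Fin (k + 1), ∃ v : Fin i, g v = t := by
    intro t
    have htlt := t.isLt
    have htr : (t : ℕ) < r := by omega
    set s := eB.symm ⟨(t : ℕ), htr⟩ with hs
    obtain ⟨v, -, hv⟩ := mem_image.1 s.2
    refine ⟨v, ?_⟩
    have h1 : (⟨f v, mem_image_of_mem f (mem_univ v)⟩ : {x // x ∈ B}) = s :=
      Subtype.ext hv
    have h2 : (eB ⟨f v, mem_image_of_mem f (mem_univ v)⟩ : ℕ) = (t : ℕ) := by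
      rw [h1, hs, Equiv.apply_symm_apply]
    apply Fin.ext
    simp only [hg, h2]
    exact Nat.mod_eq_of_lt htlt
  set Q' := fiberPart g with hQ'
  have hQ'card : Q'.parts.card = k + 1 := by
    rw [hQ', fiberPart_parts_card]
    have himg : ∀ (inst : DecidableEq (Fin (k + 1))),
        (@Finset.image _ _ inst g univ) = univ := by
      intro inst
      apply Finset.eq_univ_of_forall
      intro t
      obtain ⟨v, hv⟩ := hgsurj t
      exact Finset.mem_image.2 ⟨v, mem_univ v, hv⟩
    rw [himg, Finset.card_univ, Fintype.card_fin]
  refine ⟨cutExp Q', mem_cutGens.2 ⟨Q', hQ'card, rfl⟩, ?_⟩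
  rw [Finsupp.le_def]
  intro e
  rw [cutExp_apply]
  split_ifs with he
  · -- e crosses Q', hence crosses some P ∈ Ps
    obtain ⟨u, v, huv, hval⟩ := edge_exists_rep e
    rw [mem_cutEdges, hval, crosses_mk_iff, hQ'] at he
    have hfuv : f u ≠ f v := fun h =>
      he ((fiberPart_part_eq_iff g u v).2 (hgresp u v h))
    have hex : ∃ P : {x // x ∈ Ps}, P.1.part u ≠ P.1.part v := by
      by_contra hcon
      push_neg at hcon
      exact hfuv (funext hcon)
    obtain ⟨⟨P, hP⟩, hPuv⟩ := hex
    have hePcut : e ∈ cutEdges P := by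
      rw [mem_cutEdges, hval, crosses_mk_iff]
      exact hPuv
    have hle : cutExp P ≤ T.sup id := Finset.le_sup (f := id) ((hmemPs P).1 hP).2
    have := Finsupp.le_def.1 hle e
    rw [cutExp_apply, if_pos hePcut] at this
    exact this
  · exact Nat.zero_le _

lemma cutEdges_eq_of_cutExp_eq {P Q : Finpartition (univ : Finset (Fin i))}
    (h : cutExp P = cutExp Q) : cutEdges P = cutEdges Q := by
  ext e
  have h1 : cutExp P e = cutExp Q e := by rw [h]
  rw [cutExp_apply, cutExp_apply] at h1
  by_cases hp : e ∈ cutEdges P <;> by_cases hq : e ∈ cutEdges Q <;>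
    simp [hp, hq] at h1 ⊢

lemma dir2 (K : Type*) [Field K] (i k m : ℕ) (hk : 1 ≤ k) (hki : k ≤ i - 1)
    (hm2 : m ≤ 2 ^ k - 1) :
    Pij K i (k + 1) ≤ lcmFoldIdeal K (cutGens i 2) m := by
  have hi : 2 ≤ i := by rcases i with _ | _ | i <;> omega
  apply monIdeal_le
  intro ν hν
  obtain ⟨Q, hQcard, rfl⟩ := mem_cutGens.1 hν
  set q := Q.part with hq
  set v₀ : Fin i := ⟨0, by omega⟩
  set b₀ := q v₀ with hb₀
  set B := univ.image q with hB
  have hBcard : B.card = k + 1 := by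
    rw [hB, hq, ← parts_eq_image Q, hQcard]
  have hb₀B : b₀ ∈ B := mem_image_of_mem q (mem_univ v₀)
  set D := ((B.erase b₀).powerset).erase ∅ with hD
  have hDcard : D.card = 2 ^ k - 1 := by
    rw [hD, Finset.card_erase_of_mem (Finset.empty_mem_powerset _), Finset.card_powerset,
      Finset.card_erase_of_mem hb₀B, hBcard, Nat.add_sub_cancel]
  set gC : Finset (Finset (Fin i)) → Fin i → Bool := fun C v => decide (q v ∈ C) with hgC
  -- basic facts for C ∈ D
  have hCb₀ : ∀ C ∈ D, b₀ ∉ C := by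
    intro C hC hb
    have := (Finset.mem_powerset.1 (Finset.mem_of_mem_erase hC)) hb
    exact (Finset.mem_erase.1 this).1 rfl
  have hCex : ∀ C ∈ D, ∃ v : Fin i, q v ∈ C := by
    intro C hC
    obtain ⟨b, hb⟩ := Finset.nonempty_iff_ne_empty.2 (Finset.ne_of_mem_erase hC)
    have hbB : b ∈ B :=
      Finset.mem_of_mem_erase ((Finset.mem_powerset.1 (Finset.mem_of_mem_erase hC)) hb)
    obtain ⟨v, -, hv⟩ := mem_image.1 hbB
    exact ⟨v, by rw [hv]; exact hb⟩
  have hPC2 : ∀ C ∈ D, (fiberPart (gC C)).parts.card = 2 := by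
    intro C hC
    rw [fiberPart_parts_card]
    have himg : ∀ (inst : DecidableEq Bool), (@Finset.image _ _ inst (gC C) univ) = univ := by
      intro inst
      apply Finset.eq_univ_of_forall
      intro b
      cases b with
      | false =>
        refine Finset.mem_image.2 ⟨v₀, mem_univ v₀, ?_⟩
        simp only [hgC]
        exact decide_eq_false (hCb₀ C hC)
      | true =>
        obtain ⟨v, hv⟩ := hCex C hC
        refine Finset.mem_image.2 ⟨v, mem_univ v, ?_⟩
        simp only [hgC]
        exact decide_eq_true hv
    rw [himg, Finset.card_univ, Fintype.card_bool]
  have hsubQ : ∀ C ∈ D, cutEdges (fiberPart (gC C)) ⊆ cutEdges Q := by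
    intro C hC e he
    obtain ⟨u, v, huv, hval⟩ := edge_exists_rep e
    rw [mem_cutEdges, hval, crosses_mk_iff] at he ⊢
    intro hQuv
    apply he
    apply (fiberPart_part_eq_iff (gC C) u v).2
    simp only [hgC]
    rw [show q u = q v from hQuv]
  -- injectivity
  have hinj : Set.InjOn (fun C => cutExp (fiberPart (gC C))) D := by
    have key : ∀ C1 ∈ D, ∀ C2 ∈ D,
        cutEdges (fiberPart (gC C1)) = cutEdges (fiberPart (gC C2)) →
        ∀ b, b ∈ C1 → b ∈ C2 := by
      intro C1 h1 C2 h2 hE b hb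
      have hbB' : b ∈ B.erase b₀ :=
        (Finset.mem_powerset.1 (Finset.mem_of_mem_erase h1)) hb
      have hbne : b ≠ b₀ := (Finset.mem_erase.1 hbB').1
      obtain ⟨v, -, hv⟩ := mem_image.1 (Finset.mem_of_mem_erase hbB')
      have hvv₀ : v ≠ v₀ := by
        intro h
        exact hbne (by rw [← hv, h])
      set e : Edge i := ⟨s(v, v₀), by simp [hvv₀]⟩ with he
      have he1 : e ∈ cutEdges (fiberPart (gC C1)) := by
        rw [mem_cutEdges, he, crosses_mk_iff]
        intro hpart
        have hg := (fiberPart_part_eq_iff (gC C1) v v₀).1 hpart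
        simp only [hgC] at hg
        rw [hv] at hg
        rw [decide_eq_true hb, decide_eq_false (hCb₀ C1 h1)] at hg
        exact Bool.true_eq_false.mp hg
      have he2 : e ∈ cutEdges (fiberPart (gC C2)) := hE ▸ he1
      by_contra hb2
      have hcross : crosses (fiberPart (gC C2)) s(v, v₀) := (mem_cutEdges _ e).1 he2
      have hne := (crosses_mk_iff (fiberPart (gC C2)) v v₀).1 hcross
      apply hne
      apply (fiberPart_part_eq_iff (gC C2) v v₀).2
      simp only [hgC]
      rw [hv, decide_eq_false hb2, decide_eq_false (hCb₀ C2 h2)]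
    intro C hC C' hC' heq
    simp only at heq
    have hE := cutEdges_eq_of_cutExp_eq heq
    ext b
    exact ⟨key C hC C' hC' hE b, key C' hC' C hC hE.symm b⟩
  set T' := D.image (fun C => cutExp (fiberPart (gC C))) with hT'
  have hT'card : T'.card = 2 ^ k - 1 := by
    rw [hT', Finset.card_image_of_injOn hinj, hDcard]
  have hT'sub : T' ⊆ cutGens i 2 := by
    intro μ hμ
    obtain ⟨C, hC, rfl⟩ := mem_image.1 hμ
    exact mem_cutGens.2 ⟨fiberPart (gC C), hPC2 C hC, rfl⟩
  obtain ⟨T, hTsub', hTcard⟩ := Finset.exists_subset_card_eq (show m ≤ T'.card by omega)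
  refine ⟨T.sup id, ?_, ?_⟩
  · simp only [lcmFoldGens, Finset.mem_image]
    exact ⟨T, Finset.mem_powersetCard.2 ⟨hTsub'.trans hT'sub, hTcard⟩, rfl⟩
  · apply Finset.sup_le
    intro μ hμ
    obtain ⟨C, hC, rfl⟩ := mem_image.1 (hTsub' hμ)
    exact cutExp_le_of_subset (hsubQ C hC)

end CutProofAux

/-- Let `I = P_{i,2}` be the cut ideal of the complete graph `K_i` (whose
minimal monomial generating set is the set of cut monomials of the `2`-partitions of `{1,…,i}`),
and let `I_{i,m}` denote the `m`-fold lcm-ideal of `I`.  Then for every `k` with `1 ≤ k ≤ i − 1`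
and every `m` with `2^{k−1} ≤ m ≤ 2^k − 1`, one has `I_{i,m} = P_{i,k+1}`, the ideal generated
by the cut monomials of all `(k+1)`-partitions of `{1,…,i}`. -/
theorem lcmFold_cutIdeal_eq_Pij (K : Type*) [Field K] (i k : ℕ)
    (hk : 1 ≤ k) (hki : k ≤ i - 1) :
    ∀ m : ℕ, 2 ^ (k - 1) ≤ m → m ≤ 2 ^ k - 1 →
      lcmFoldIdeal K (cutGens i 2) m = Pij K i (k + 1) := by
  intro m hm1 hm2
  exact le_antisymm (CutProofAux.dir1 K i k m hk hki hm1)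
    (CutProofAux.dir2 K i k m hk hki hm2)
end
end

section
/- For the complete graph K_i and 2 ≤ j ≤ i, the ideal P_{i,j} generated by the cut monomials of all j-partitions of {1,…,i} is minimally generated by these cut monomials, and its number of minimal monomial generators equals the Stirling number of the second kind S(i,j), the number of partitions of an i-element set into j nonempty blocks. -/
open MvPolynomial Finset

noncomputable section
open scoped Classical

variable {σ : Type*}

/-- If `Q` refines `P` and they have the same number of parts, they are equal. -/
lemma finpartition_eq_of_le_of_card {α : Type*} [DecidableEq α] {s : Finset α}
    {P Q : Finpartition s} (h : Q ≤ P) (hc : P.parts.card = Q.parts.card) : Q = P := by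
  have hex : ∀ b : Finset α, ∃ c, b ∈ Q.parts → c ∈ P.parts ∧ b ⊆ c := by
    intro b
    by_cases hb : b ∈ Q.parts
    · obtain ⟨c, hc1, hc2⟩ := h hb
      exact ⟨c, fun _ => ⟨hc1, hc2⟩⟩
    · exact ⟨∅, fun h' => absurd h' hb⟩
  choose f hf using hex
  have hmaps : ∀ b ∈ Q.parts, f b ∈ P.parts := fun b hb => (hf b hb).1
  have hsub : ∀ b ∈ Q.parts, b ⊆ f b := fun b hb => (hf b hb).2
  have hsurj : ∀ c ∈ P.parts, ∃ b ∈ Q.parts, f b = c := by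
    intro c hcp
    obtain ⟨u, hu⟩ := P.nonempty_of_mem_parts hcp
    have hus : u ∈ s := Finset.mem_of_subset (P.le hcp) hu
    refine ⟨Q.part u, (Q.part_mem.mpr hus), ?_⟩
    exact P.eq_of_mem_parts (hmaps _ ((Q.part_mem.mpr hus))) hcp
      (hsub _ ((Q.part_mem.mpr hus)) (Q.mem_part hus)) hu
  have hinj : ∀ ⦃b⦄, b ∈ Q.parts → ∀ ⦃c⦄, c ∈ Q.parts → f b = f c → b = c := by
    have := Finset.inj_on_of_surj_on_of_card_le (s := Q.parts) (t := P.parts)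
      (fun b _ => f b) (fun b hb => hmaps b hb)
      (fun c hcp => by obtain ⟨b, hb, hfb⟩ := hsurj c hcp; exact ⟨b, hb, hfb⟩)
      (by omega)
    exact fun b hb c hcc he => this hb hcc he
  have heq : ∀ b ∈ Q.parts, b = f b := by
    intro b hb
    refine Finset.Subset.antisymm (hsub b hb) ?_
    intro u hu
    have hus : u ∈ s := Finset.mem_of_subset (P.le (hmaps b hb)) hu
    have hcb : f (Q.part u) = f b :=
      P.eq_of_mem_parts (hmaps _ ((Q.part_mem.mpr hus))) (hmaps b hb)
        (hsub _ ((Q.part_mem.mpr hus)) (Q.mem_part hus)) hu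
    have : Q.part u = b := hinj ((Q.part_mem.mpr hus)) hb hcb
    exact this ▸ Q.mem_part hus
  have hQP : Q.parts ⊆ P.parts := fun b hb => (heq b hb) ▸ hmaps b hb
  exact Finpartition.ext (Finset.eq_of_subset_of_card_le hQP hc.le)

lemma cutExp_apply {i : ℕ} (P : Finpartition (univ : Finset (Fin i))) (e : Edge i) :
    cutExp P e = if e ∈ cutEdges P then 1 else 0 := by
  classical
  simp [cutExp, Finsupp.finset_sum_apply, Finsupp.single_apply, Finset.sum_ite_eq]

lemma mem_cutEdges {i : ℕ} {P : Finpartition (univ : Finset (Fin i))} {e : Edge i} :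
    e ∈ cutEdges P ↔ crosses P e.val := by simp [cutEdges]

/-- If every edge cut by `P` is cut by `Q`, then `Q` refines `P`. -/
lemma le_of_cutEdges_subset {i : ℕ} {P Q : Finpartition (univ : Finset (Fin i))}
    (h : cutEdges P ⊆ cutEdges Q) : Q ≤ P := by
  have key : ∀ u v : Fin i, v ∈ Q.part u → v ∈ P.part u := by
    intro u v hv
    by_cases huv : u = v
    · exact huv ▸ P.mem_part (Finset.mem_univ u)
    · set e : Edge i := ⟨s(u, v), by simp [Sym2.mk_isDiag_iff, huv]⟩ with he
      have heQ : e ∉ cutEdges Q := by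
        rw [mem_cutEdges]
        intro hcr
        exact hcr ⟨Q.part u, (Q.part_mem.mpr (Finset.mem_univ u)), by
          intro w hw
          rcases Sym2.mem_iff.mp hw with rfl | rfl
          · exact Q.mem_part (Finset.mem_univ _)
          · exact hv⟩
      have heP : e ∉ cutEdges P := fun hP => heQ (h hP)
      rw [mem_cutEdges, crosses, not_not] at heP
      obtain ⟨t, htP, ht⟩ := heP
      have hut : u ∈ t := ht u (by simp [he])
      have hvt : v ∈ t := ht v (by simp [he])
      rwa [P.part_eq_of_mem htP hut]
  intro b hb
  obtain ⟨u, hu⟩ := Q.nonempty_of_mem_parts hb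
  refine ⟨P.part u, (P.part_mem.mpr (Finset.mem_univ u)), ?_⟩
  intro v hv
  have : b = Q.part u := (Q.part_eq_of_mem hb hu).symm
  exact key u v (this ▸ hv)

lemma cutEdges_subset_of_le {i : ℕ} {P Q : Finpartition (univ : Finset (Fin i))}
    (h : cutExp P ≤ cutExp Q) : cutEdges P ⊆ cutEdges Q := by
  intro e he
  have := h e
  rw [cutExp_apply, cutExp_apply, if_pos he] at this
  by_contra hQ
  rw [if_neg hQ] at this
  omega

lemma eq_of_cutExp_le {i j : ℕ} {P Q : Finpartition (univ : Finset (Fin i))}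
    (hP : P.parts.card = j) (hQ : Q.parts.card = j) (h : cutExp P ≤ cutExp Q) : Q = P :=
  finpartition_eq_of_le_of_card (le_of_cutEdges_subset (cutEdges_subset_of_le h))
    (hP.trans hQ.symm)

/-- For the complete graph `K_i` and `2 ≤ j ≤ i`, the ideal `P_{i,j}` generated
by the cut monomials of all `j`-partitions of `{1,…,i}` is minimally generated by these cut
monomials — i.e. the cut monomials of distinct `j`-partitions are pairwise incomparable under
divisibility — and the number of minimal monomial generators equals the Stirling number of the
second kind `S(i,j)`, the number of partitions of an `i`-element set into `j` nonempty blocks. -/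
theorem Pij_minimally_generated_card_stirling (K : Type*) [Field K] (i j : ℕ)
    (h2 : 2 ≤ j) (hj : j ≤ i) :
    Pij K i j = monIdeal K (cutGens i j) ∧
    (∀ μ ∈ cutGens i j, ∀ ν ∈ cutGens i j, μ ≤ ν → μ = ν) ∧
    (cutGens i j).card =
      Nat.card {P : Finpartition (univ : Finset (Fin i)) // P.parts.card = j} := by
  classical
  refine ⟨rfl, ?_, ?_⟩
  · intro μ hμ ν hν hle
    simp only [cutGens, Set.Finite.mem_toFinset, Set.mem_image, Set.mem_setOf_eq] at hμ hν
    obtain ⟨P, hP, rfl⟩ := hμ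
    obtain ⟨Q, hQ, rfl⟩ := hν
    rw [eq_of_cutExp_le hP hQ hle]
  · have hinj : Set.InjOn cutExp
        {P : Finpartition (univ : Finset (Fin i)) | P.parts.card = j} := by
      intro P hP Q hQ he
      exact (eq_of_cutExp_le hP hQ he.le).symm
    have h1 : (cutGens i j).card =
        (cutExp '' {P : Finpartition (univ : Finset (Fin i)) | P.parts.card = j}).ncard := by
      rw [Set.ncard_eq_toFinset_card _ (Set.toFinite _)]
      rfl
    rw [h1, Set.ncard_image_of_injOn hinj, ← Nat.card_coe_set_eq]
    rfl
end
end

section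
/- Let K_i be the complete graph on i vertices, let 2 ≤ j ≤ i, let P_{i,j} be the ideal generated by the cut monomials of all j-partitions of {1,…,i}, and let Δ_{i,j} be the Stanley–Reisner simplicial complex (on vertex set E(K_i)) associated to the squarefree ideal P_{i,j}. Then F ⊆ E(K_i) is a facet of Δ_{i,j} if and only if F = E(K_i) ∖ S for some S ⊆ E(K_i) with |S| = i − j + 1 such that S contains no cycle. -/
open MvPolynomial Finset

noncomputable section
open scoped Classical

variable {σ : Type*}

/-- The exponent vector of the squarefree monomial `∏_{e ∈ F} x_e`. -/
def sfExpE {i : ℕ} (F : Finset (Edge i)) : Edge i →₀ ℕ :=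
  ∑ e ∈ F, Finsupp.single e 1

/-- `F` is a face of the Stanley–Reisner complex `Δ_{i,j}` of the squarefree monomial ideal
`P_{i,j}`, i.e. `∏_{e ∈ F} x_e ∉ P_{i,j}`. -/
def isFace (K : Type*) [Field K] (i j : ℕ) (F : Finset (Edge i)) : Prop :=
  (monomial (sfExpE F) 1 : MvPolynomial (Edge i) K) ∉ Pij K i j

/-- `F` is a facet of `Δ_{i,j}`: a face maximal with respect to inclusion. -/
def isFacet (K : Type*) [Field K] (i j : ℕ) (F : Finset (Edge i)) : Prop :=
  isFace K i j F ∧ ∀ F' : Finset (Edge i), isFace K i j F' → F ⊆ F' → F = F'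

/-- The spanning subgraph of `K_i` with edge set `S`. -/
def graphOf {i : ℕ} (S : Finset (Edge i)) : SimpleGraph (Fin i) :=
  SimpleGraph.fromEdgeSet (Subtype.val '' (S : Set (Edge i)))


section AuxGraph
open SimpleGraph
set_option linter.unusedSectionVars false

section General
variable {V : Type*} [Fintype V]


lemma reachable_sup_edge {G : SimpleGraph V} {u v : V} (huv : u ≠ v) {a b : V} :
    (G ⊔ SimpleGraph.fromEdgeSet {s(u,v)}).Reachable a b ↔
      G.Reachable a b ∨ (G.Reachable a u ∧ G.Reachable v b) ∨
        (G.Reachable a v ∧ G.Reachable u b) := by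
  constructor
  · rintro ⟨w⟩
    induction w with
    | nil => exact Or.inl (Reachable.refl _)
    | @cons x y z hxy p ih =>
      rw [sup_adj, fromEdgeSet_adj] at hxy
      rcases hxy with hG | ⟨hmem, hxy⟩
      · rcases ih with h | ⟨h1, h2⟩ | ⟨h1, h2⟩
        · exact Or.inl (hG.reachable.trans h)
        · exact Or.inr (Or.inl ⟨hG.reachable.trans h1, h2⟩)
        · exact Or.inr (Or.inr ⟨hG.reachable.trans h1, h2⟩)
      · rw [Set.mem_singleton_iff, Sym2.eq_iff] at hmem
        rcases hmem with ⟨rfl, rfl⟩ | ⟨rfl, rfl⟩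
        · rcases ih with h | ⟨h1, h2⟩ | ⟨h1, h2⟩
          · exact Or.inr (Or.inl ⟨Reachable.refl _, h⟩)
          · exact Or.inl (h1.symm.trans h2)
          · exact Or.inl h2
        · rcases ih with h | ⟨h1, h2⟩ | ⟨h1, h2⟩
          · exact Or.inr (Or.inr ⟨Reachable.refl _, h⟩)
          · exact Or.inl h2
          · exact Or.inl (h1.symm.trans h2)
  · have hadj : (G ⊔ SimpleGraph.fromEdgeSet {s(u,v)}).Adj u v := by
      rw [sup_adj, fromEdgeSet_adj]; exact Or.inr ⟨rfl, huv⟩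
    rintro (h | ⟨h1, h2⟩ | ⟨h1, h2⟩)
    · exact h.mono le_sup_left
    · exact ((h1.mono le_sup_left).trans hadj.reachable).trans (h2.mono le_sup_left)
    · exact ((h1.mono le_sup_left).trans hadj.symm.reachable).trans (h2.mono le_sup_left)

lemma cc_surjective {G H : SimpleGraph V} (h : G ≤ H) :
    Function.Surjective
      (ConnectedComponent.map (Hom.ofLE h)) := by
  intro c
  induction c using ConnectedComponent.ind with
  | _ v => exact ⟨G.connectedComponentMk v, ConnectedComponent.map_mk _ _⟩

lemma card_cc_le_of_le {G H : SimpleGraph V} (h : G ≤ H) :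
    Nat.card H.ConnectedComponent ≤ Nat.card G.ConnectedComponent :=
  Nat.card_le_card_of_surjective _ (cc_surjective h)

lemma card_cc_sup_edge_of_reachable {G : SimpleGraph V} {u v : V} (huv : u ≠ v)
    (hr : G.Reachable u v) :
    Nat.card (G ⊔ SimpleGraph.fromEdgeSet {s(u,v)}).ConnectedComponent
      = Nat.card G.ConnectedComponent := by
  refine (Nat.card_eq_of_bijective _ ⟨?_, cc_surjective le_sup_left⟩).symm
  intro x y hxy
  induction x using ConnectedComponent.ind with
  | _ a =>
  induction y using ConnectedComponent.ind with
  | _ b =>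
  rw [ConnectedComponent.map_mk, ConnectedComponent.map_mk,
    ConnectedComponent.eq] at hxy
  rw [ConnectedComponent.eq]
  simp only [Hom.ofLE_apply] at hxy
  rcases (reachable_sup_edge huv).mp hxy with h | ⟨h1, h2⟩ | ⟨h1, h2⟩
  · exact h
  · exact (h1.trans hr).trans h2
  · exact (h1.trans hr.symm).trans h2

lemma card_cc_sup_edge_of_not_reachable {G : SimpleGraph V} {u v : V} (huv : u ≠ v)
    (hr : ¬ G.Reachable u v) :
    Nat.card G.ConnectedComponent
      = Nat.card (G ⊔ SimpleGraph.fromEdgeSet {s(u,v)}).ConnectedComponent + 1 := by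
  set H := G ⊔ SimpleGraph.fromEdgeSet {s(u,v)} with hH
  have hle : G ≤ H := le_sup_left
  set φ := ConnectedComponent.map (Hom.ofLE hle) with hφ
  have hφmk : ∀ a : V, φ (G.connectedComponentMk a) = H.connectedComponentMk a :=
    fun a => ConnectedComponent.map_mk _ _
  set cv := G.connectedComponentMk v with hcv
  have key : ∀ x y : G.ConnectedComponent, φ x = φ y →
      x = y ∨ (x = G.connectedComponentMk u ∧ y = cv) ∨
        (x = cv ∧ y = G.connectedComponentMk u) := by
    intro x y hxy
    induction x using ConnectedComponent.ind with
    | _ a =>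
    induction y using ConnectedComponent.ind with
    | _ b =>
    rw [hφmk, hφmk, ConnectedComponent.eq] at hxy
    rcases (reachable_sup_edge huv).mp hxy with h | ⟨h1, h2⟩ | ⟨h1, h2⟩
    · exact Or.inl (ConnectedComponent.eq.mpr h)
    · exact Or.inr (Or.inl ⟨ConnectedComponent.eq.mpr h1,
        ConnectedComponent.eq.mpr h2.symm⟩)
    · exact Or.inr (Or.inr ⟨ConnectedComponent.eq.mpr h1,
        ConnectedComponent.eq.mpr h2.symm⟩)
  have hbij : Function.Bijective (fun x : {c : G.ConnectedComponent // c ≠ cv} => φ x.1) := by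
    constructor
    · rintro ⟨x, hx⟩ ⟨y, hy⟩ hxy
      simp only at hxy
      rcases key x y hxy with h | ⟨h1, h2⟩ | ⟨h1, h2⟩
      · exact Subtype.ext h
      · exact absurd h2 hy
      · exact absurd h1 hx
    · intro c
      obtain ⟨x, hx⟩ := cc_surjective hle c
      by_cases hxc : x = cv
      · refine ⟨⟨G.connectedComponentMk u, ?_⟩, ?_⟩
        · intro h
          rw [hcv, ConnectedComponent.eq] at h
          exact hr h
        · subst hxc
          rw [← hx]
          show φ (G.connectedComponentMk u) = φ cv
          rw [hcv, hφmk, hφmk, ConnectedComponent.eq]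
          exact (reachable_sup_edge huv).mpr (Or.inr (Or.inl ⟨Reachable.refl _, Reachable.refl _⟩))
      · exact ⟨⟨x, hxc⟩, hx⟩
  have h1 : Nat.card {c : G.ConnectedComponent // c ≠ cv}
      = Nat.card H.ConnectedComponent := Nat.card_eq_of_bijective _ hbij
  haveI : Fintype G.ConnectedComponent := Fintype.ofFinite _
  have h2 : Nat.card {c : G.ConnectedComponent // c ≠ cv}
      = Nat.card G.ConnectedComponent - 1 := by
    rw [Nat.card_eq_fintype_card, Nat.card_eq_fintype_card]
    rw [Fintype.card_subtype_compl (p := fun c => c = cv)]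
    simp [Fintype.card_subtype_eq]
  have h3 : 1 ≤ Nat.card G.ConnectedComponent := by
    rw [Nat.card_eq_fintype_card]
    exact Fintype.card_pos_iff.mpr ⟨cv⟩
  omega

end General

variable {i j : ℕ}

def nComp {i : ℕ} (S : Finset (Edge i)) : ℕ := Nat.card (graphOf S).ConnectedComponent

variable {i : ℕ}

lemma edge_exists (e : Edge i) : ∃ u v : Fin i, e.val = s(u,v) ∧ u ≠ v := by
  obtain ⟨⟨u, v⟩, h⟩ := e.val.exists_rep
  refine ⟨u, v, h.symm, ?_⟩
  intro huv
  have := e.property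
  rw [← h] at this
  exact this (by simp [huv, Sym2.mk_isDiag_iff])

lemma graphOf_empty : graphOf (∅ : Finset (Edge i)) = ⊥ := by
  simp [graphOf]

lemma nComp_empty : nComp (∅ : Finset (Edge i)) = i := by
  rw [nComp, graphOf_empty]
  have : Function.Bijective ((⊥ : SimpleGraph (Fin i)).connectedComponentMk) := by
    constructor
    · intro a b h
      exact reachable_bot.mp (ConnectedComponent.eq.mp h)
    · intro c
      induction c using ConnectedComponent.ind with
      | _ v => exact ⟨v, rfl⟩
  rw [← Nat.card_eq_of_bijective _ this, Nat.card_eq_fintype_card, Fintype.card_fin]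

lemma graphOf_mono {S T : Finset (Edge i)} (h : S ⊆ T) : graphOf S ≤ graphOf T :=
  SimpleGraph.fromEdgeSet_mono (Set.image_mono (by exact_mod_cast h))

lemma nComp_mono {S T : Finset (Edge i)} (h : S ⊆ T) : nComp T ≤ nComp S :=
  card_cc_le_of_le (graphOf_mono h)

lemma graphOf_insert {e : Edge i} {S : Finset (Edge i)} {u v : Fin i} (he : e.val = s(u,v)) :
    graphOf (insert e S) = graphOf S ⊔ SimpleGraph.fromEdgeSet {s(u,v)} := by
  rw [graphOf, graphOf, coe_insert, Set.image_insert_eq, he,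
    ← Set.singleton_union, SimpleGraph.fromEdgeSet_union, sup_comm]

lemma adj_graphOf {e : Edge i} {S : Finset (Edge i)} {u v : Fin i} (he : e.val = s(u,v))
    (heS : e ∈ S) (huv : u ≠ v) : (graphOf S).Adj u v := by
  rw [graphOf, SimpleGraph.fromEdgeSet_adj]
  exact ⟨⟨e, by simpa using heS, he⟩, huv⟩

lemma nComp_insert_le {e : Edge i} {S : Finset (Edge i)} :
    nComp S ≤ nComp (insert e S) + 1 := by
  obtain ⟨u, v, he, huv⟩ := edge_exists e
  rw [nComp, nComp, graphOf_insert he]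
  by_cases hr : (graphOf S).Reachable u v
  · rw [card_cc_sup_edge_of_reachable huv hr]
    omega
  · rw [← card_cc_sup_edge_of_not_reachable huv hr]

lemma le_card_add_nComp (S : Finset (Edge i)) : i ≤ S.card + nComp S := by
  induction S using Finset.induction_on with
  | empty => simp [nComp_empty]
  | @insert e S he ih =>
    have := nComp_insert_le (e := e) (S := S)
    rw [card_insert_of_notMem he]
    omega

lemma card_add_nComp_of_acyclic {S : Finset (Edge i)} (h : (graphOf S).IsAcyclic) :
    S.card + nComp S = i := by
  induction S using Finset.induction_on with
  | empty => simp [nComp_empty]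
  | @insert e S he ih =>
    obtain ⟨u, v, hev, huv⟩ := edge_exists e
    have hle : graphOf S ≤ graphOf (insert e S) := graphOf_mono (subset_insert _ _)
    have hS : (graphOf S).IsAcyclic := fun a c hc => h (c.mapLe hle) (hc.mapLe hle)
    have hnr : ¬ (graphOf S).Reachable u v := by
      intro hr
      have hadj : (graphOf (insert e S)).Adj u v :=
        adj_graphOf hev (mem_insert_self _ _) huv
      have hbridge := (isAcyclic_iff_forall_adj_isBridge.mp h) hadj
      rw [isBridge_iff] at hbridge
      refine hbridge (hr.mono ?_)
      intro a b hab
      rw [deleteEdges, SimpleGraph.sdiff_adj]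
      constructor
      · exact hle hab
      · rw [SimpleGraph.fromEdgeSet_adj]
        rintro ⟨hmem, -⟩
        rw [Set.mem_singleton_iff] at hmem
        rw [graphOf, SimpleGraph.fromEdgeSet_adj] at hab
        obtain ⟨⟨e', he'S, he'⟩, -⟩ := hab
        apply he
        have : e' = e := Subtype.ext (by rw [he', hmem, hev])
        rwa [← this]
    have hcount : nComp S = nComp (insert e S) + 1 := by
      rw [nComp, nComp, graphOf_insert hev]
      exact card_cc_sup_edge_of_not_reachable huv hnr
    rw [card_insert_of_notMem he]
    rw [hcount] at ih
    have := ih hS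
    omega
set_option maxHeartbeats 1000000 in
lemma exists_partition_iff {S : Finset (Edge i)} {j : ℕ} (hj1 : 1 ≤ j) (hji : j ≤ i) :
    (∃ P : Finpartition (univ : Finset (Fin i)), P.parts.card = j ∧
      ∀ e ∈ S, ∃ t ∈ P.parts, ∀ w ∈ e.val, w ∈ t) ↔ j ≤ nComp S := by
  constructor
  · rintro ⟨P, hPcard, hP⟩
    have hwalk : ∀ a b : Fin i, (graphOf S).Reachable a b →
        ∀ t ∈ P.parts, a ∈ t → b ∈ t := by
      rintro a b ⟨w⟩
      induction w with
      | nil => exact fun t ht ha => ha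
      | @cons x y z hxy p ih =>
        intro t ht hx
        rw [graphOf, SimpleGraph.fromEdgeSet_adj] at hxy
        obtain ⟨⟨e, heS, hev⟩, hne⟩ := hxy
        obtain ⟨t', ht', hmem⟩ := hP e (by simpa using heS)
        have hxt' : x ∈ t' := hmem x (by rw [hev]; exact Sym2.mem_mk_left x y)
        have hyt' : y ∈ t' := hmem y (by rw [hev]; exact Sym2.mem_mk_right x y)
        have htt' : t = t' := P.eq_of_mem_parts ht ht' hx hxt'
        exact ih t ht (htt' ▸ hyt')
    set f : {t : Finset (Fin i) // t ∈ P.parts} → (graphOf S).ConnectedComponent :=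
      fun t => (graphOf S).connectedComponentMk (P.nonempty_of_mem_parts t.2).choose with hf
    have hinj : Function.Injective f := by
      rintro ⟨t, ht⟩ ⟨t', ht'⟩ hft
      have hr := ConnectedComponent.eq.mp hft
      have h1 := (P.nonempty_of_mem_parts ht).choose_spec
      have h2 := (P.nonempty_of_mem_parts ht').choose_spec
      have h3 : (P.nonempty_of_mem_parts ht').choose ∈ t := hwalk _ _ hr t ht h1
      exact Subtype.ext (P.eq_of_mem_parts ht ht' h3 h2)
    calc j = P.parts.card := hPcard.symm
      _ = Nat.card {t : Finset (Fin i) // t ∈ P.parts} := by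
          rw [Nat.card_eq_fintype_card, Fintype.card_coe]
      _ ≤ nComp S := Nat.card_le_card_of_injective f hinj
  · intro hle
    haveI : Fintype (graphOf S).ConnectedComponent := Fintype.ofFinite _
    have hcard : j ≤ Fintype.card (graphOf S).ConnectedComponent := by
      rwa [← Nat.card_eq_fintype_card]
    set q := Fintype.equivFin (graphOf S).ConnectedComponent with hq
    set f : Fin i → Fin j := fun a =>
      ⟨min (q ((graphOf S).connectedComponentMk a)).val (j-1), by omega⟩ with hfdef
    have hfsurj : Function.Surjective f := by
      intro k
      obtain ⟨a, ha⟩ : ∃ a : Fin i, (graphOf S).connectedComponentMk a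
          = q.symm ⟨k.val, by omega⟩ := by
        induction (q.symm ⟨k.val, by omega⟩ : (graphOf S).ConnectedComponent)
          using ConnectedComponent.ind with
        | _ v => exact ⟨v, rfl⟩
      refine ⟨a, ?_⟩
      rw [hfdef]
      apply Fin.ext
      simp only [ha, Equiv.apply_symm_apply]
      have := k.isLt
      omega
    set P := Finpartition.ofSetoid (Setoid.ker f) with hP
    refine ⟨P, ?_, ?_⟩
    · -- card of parts = j
      have hmem_iff : ∀ a b : Fin i, b ∈ P.part a ↔ f a = f b := fun a b =>
        Finpartition.mem_part_ofSetoid_iff_rel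
      have hpart_eq : ∀ (t : Finset (Fin i)) (a : Fin i), t ∈ P.parts → a ∈ t →
          t = P.part a := fun t a ht ha =>
        P.eq_of_mem_parts ht (P.part_mem.2 (mem_univ a)) ha (P.mem_part (mem_univ a))
      set g1 : {t : Finset (Fin i) // t ∈ P.parts} → Fin j :=
        fun t => f (P.nonempty_of_mem_parts t.2).choose with hg1
      have hg1inj : Function.Injective g1 := by
        rintro ⟨t, ht⟩ ⟨t', ht'⟩ h
        set a := (P.nonempty_of_mem_parts ht).choose with ha
        set a' := (P.nonempty_of_mem_parts ht').choose with ha'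
        have haint : a ∈ t := (P.nonempty_of_mem_parts ht).choose_spec
        have haint' : a' ∈ t' := (P.nonempty_of_mem_parts ht').choose_spec
        have h1 : t = P.part a := hpart_eq t a ht haint
        have h2 : t' = P.part a' := hpart_eq t' a' ht' haint'
        have h3 : a' ∈ P.part a := (hmem_iff a a').mpr h
        have h4 : P.part a = P.part a' := P.eq_of_mem_parts
          (P.part_mem.2 (mem_univ a)) (P.part_mem.2 (mem_univ a')) h3 (P.mem_part (mem_univ a'))
        exact Subtype.ext (h1.trans (h4.trans h2.symm))
      set g2 : Fin j → {t : Finset (Fin i) // t ∈ P.parts} :=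
        fun k => ⟨P.part (hfsurj k).choose, P.part_mem.2 (mem_univ _)⟩ with hg2
      have hg2inj : Function.Injective g2 := by
        intro k k' h
        have h1 : f (hfsurj k).choose = k := (hfsurj k).choose_spec
        have h2 : f (hfsurj k').choose = k' := (hfsurj k').choose_spec
        have h3 : P.part (hfsurj k).choose = P.part (hfsurj k').choose :=
          congrArg Subtype.val h
        have h4 : (hfsurj k').choose ∈ P.part (hfsurj k).choose := by
          rw [h3]; exact P.mem_part (mem_univ _)
        have h5 := (hmem_iff _ _).mp h4
        rw [h1, h2] at h5
        exact h5
      have hle1 : P.parts.card ≤ j := by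
        have := Nat.card_le_card_of_injective g1 hg1inj
        rwa [Nat.card_eq_fintype_card, Fintype.card_coe, Nat.card_eq_fintype_card,
          Fintype.card_fin] at this
      have hle2 : j ≤ P.parts.card := by
        have := Nat.card_le_card_of_injective g2 hg2inj
        rwa [Nat.card_eq_fintype_card, Fintype.card_fin, Nat.card_eq_fintype_card,
          Fintype.card_coe] at this
      omega
    · intro e heS
      obtain ⟨u, v, hev, huv⟩ := edge_exists e
      have hadj : (graphOf S).Adj u v := adj_graphOf hev heS huv
      have hfuv : f u = f v := by
        rw [hfdef]
        simp [ConnectedComponent.connectedComponentMk_eq_of_adj hadj]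
      refine ⟨P.part u, P.part_mem.2 (mem_univ u), ?_⟩
      intro w hw
      rw [hev, Sym2.mem_iff] at hw
      rcases hw with rfl | rfl
      · exact P.mem_part (mem_univ w)
      · exact Finpartition.mem_part_ofSetoid_iff_rel.mpr hfuv

lemma isAcyclic_of_all_erase {S : Finset (Edge i)} {j : ℕ}
    (hS : nComp S < j) (hE : ∀ e ∈ S, j ≤ nComp (S.erase e)) :
    (graphOf S).IsAcyclic := by
  rw [isAcyclic_iff_forall_adj_isBridge]
  intro a b hab
  have hab' := hab
  rw [graphOf, SimpleGraph.fromEdgeSet_adj] at hab'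
  obtain ⟨⟨e, heS, hev⟩, hne⟩ := hab'
  rw [isBridge_iff]
  refine fun hr => ?_
  have hle : graphOf S \ SimpleGraph.fromEdgeSet {s(a,b)} ≤ graphOf (S.erase e) := by
    intro x y hxy
    rw [SimpleGraph.sdiff_adj] at hxy
    obtain ⟨h1, h2⟩ := hxy
    rw [graphOf, SimpleGraph.fromEdgeSet_adj] at h1 ⊢
    obtain ⟨⟨e', he'S, he'v⟩, hxyne⟩ := h1
    have he'mem : e' ∈ S := by simpa using he'S
    have hne' : e' ≠ e := by
      intro hcontra
      apply h2
      rw [SimpleGraph.fromEdgeSet_adj]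
      exact ⟨by rw [Set.mem_singleton_iff, ← he'v, hcontra, hev], hxyne⟩
    exact ⟨⟨e', by simp [Finset.mem_erase, hne', he'mem], he'v⟩, hxyne⟩
  have h2 : (graphOf (S.erase e)).Reachable a b := hr.mono hle
  have heq : nComp S = nComp (S.erase e) := by
    have hrw : S = insert e (S.erase e) := (insert_erase (by simpa using heS)).symm
    have hgr : graphOf S = graphOf (S.erase e) ⊔ SimpleGraph.fromEdgeSet {s(a,b)} := by
      conv_lhs => rw [hrw]
      exact graphOf_insert hev
    rw [nComp, hgr, card_cc_sup_edge_of_reachable hne h2]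
    rfl
  have := hE e (by simpa using heS)
  omega

lemma sfExpE_apply (F : Finset (Edge i)) (e : Edge i) :
    sfExpE F e = if e ∈ F then 1 else 0 := by
  rw [sfExpE, Finset.sum_apply']
  simp [Finsupp.single_apply]

lemma sfExpE_le_iff {A B : Finset (Edge i)} : sfExpE A ≤ sfExpE B ↔ A ⊆ B := by
  constructor
  · intro h e he
    have := h e
    rw [sfExpE_apply, sfExpE_apply, if_pos he] at this
    by_contra hcon
    rw [if_neg hcon] at this
    omega
  · intro h e
    rw [sfExpE_apply, sfExpE_apply]
    by_cases he : e ∈ A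
    · rw [if_pos he, if_pos (h he)]
    · rw [if_neg he]
      positivity

lemma cutExp_eq (P : Finpartition (univ : Finset (Fin i))) :
    cutExp P = sfExpE (cutEdges P) := rfl

lemma isFace_iff_no_partition (K : Type*) [Field K] (F : Finset (Edge i)) :
    isFace K i j F ↔
      ¬ ∃ P : Finpartition (univ : Finset (Fin i)), P.parts.card = j ∧ cutEdges P ⊆ F := by
  rw [isFace, Pij, monIdeal, mem_ideal_span_monomial_image]
  rw [support_monomial, if_neg (one_ne_zero : (1:K) ≠ 0)]
  simp only [Finset.mem_singleton, forall_eq]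
  constructor
  · intro h hP
    obtain ⟨P, hPcard, hPsub⟩ := hP
    refine h ⟨cutExp P, ?_, ?_⟩
    · rw [Finset.mem_coe, cutGens, Set.Finite.mem_toFinset]
      exact ⟨P, hPcard, rfl⟩
    · rw [cutExp_eq, sfExpE_le_iff]
      exact hPsub
  · intro h hex
    obtain ⟨si, hsi, hle⟩ := hex
    rw [Finset.mem_coe, cutGens, Set.Finite.mem_toFinset] at hsi
    obtain ⟨P, hPcard, rfl⟩ := hsi
    rw [cutExp_eq, sfExpE_le_iff] at hle
    exact h ⟨P, hPcard, hle⟩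

lemma cutEdges_subset_iff (P : Finpartition (univ : Finset (Fin i))) (F : Finset (Edge i)) :
    cutEdges P ⊆ F ↔ ∀ e ∈ univ \ F, ∃ t ∈ P.parts, ∀ w ∈ e.val, w ∈ t := by
  constructor
  · intro h e he
    rw [Finset.mem_sdiff] at he
    by_contra hcon
    exact he.2 (h (by rw [cutEdges, Finset.mem_filter]; exact ⟨Finset.mem_univ _, hcon⟩))
  · intro h e he
    rw [cutEdges, Finset.mem_filter] at he
    by_contra hcon
    exact he.2 (h e (Finset.mem_sdiff.mpr ⟨Finset.mem_univ _, hcon⟩))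

lemma isFace_iff_nComp (K : Type*) [Field K] (hj1 : 1 ≤ j) (hji : j ≤ i)
    (F : Finset (Edge i)) : isFace K i j F ↔ nComp (univ \ F) < j := by
  rw [isFace_iff_no_partition K F]
  simp_rw [cutEdges_subset_iff]
  rw [exists_partition_iff hj1 hji, not_le]

end AuxGraph

/-- Let `K_i` be the complete graph on `i` vertices, `2 ≤ j ≤ i`, let `P_{i,j}`
be the ideal generated by the cut monomials of all `j`-partitions of `{1,…,i}`, and let
`Δ_{i,j}` be the Stanley–Reisner complex (on vertex set `E(K_i)`) of the squarefree ideal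
`P_{i,j}`.  Then `F ⊆ E(K_i)` is a facet of `Δ_{i,j}` if and only if `F = E(K_i) ∖ S` for some
`S ⊆ E(K_i)` with `|S| = i − j + 1` containing no cycle. -/
theorem facet_iff_compl_acyclic (K : Type*) [Field K] (i j : ℕ)
    (h2 : 2 ≤ j) (hj : j ≤ i) (F : Finset (Edge i)) :
    isFacet K i j F ↔
      ∃ S : Finset (Edge i), S.card = i - j + 1 ∧ (graphOf S).IsAcyclic ∧ F = univ \ S := by
  have hj1 : 1 ≤ j := le_trans (by norm_num) h2
  constructor
  · rintro ⟨hface, hmax⟩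
    set S := univ \ F with hSdef
    have hFS : F = univ \ S := by
      rw [hSdef, Finset.sdiff_sdiff_self_left, Finset.univ_inter]
    have hc : nComp S < j := (isFace_iff_nComp K hj1 hj F).mp hface
    have hE : ∀ e ∈ S, j ≤ nComp (S.erase e) := by
      intro e he
      have heF : e ∉ F := (Finset.mem_sdiff.mp he).2
      have hne : F ≠ insert e F := fun h => heF (h ▸ Finset.mem_insert_self e F)
      have hnf : ¬ isFace K i j (insert e F) :=
        fun hf => hne (hmax _ hf (Finset.subset_insert _ _))
      have h2' : ¬ (nComp (univ \ insert e F) < j) :=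
        fun hlt => hnf ((isFace_iff_nComp K hj1 hj _).mpr hlt)
      have heq : univ \ insert e F = S.erase e := by
        rw [hSdef]
        ext x
        simp only [Finset.mem_sdiff, Finset.mem_insert, Finset.mem_erase, Finset.mem_univ,
          true_and]
        tauto
      rw [heq] at h2'
      omega
    have hSne : S.Nonempty := by
      by_contra h
      rw [Finset.not_nonempty_iff_eq_empty] at h
      rw [h, nComp_empty] at hc
      omega
    obtain ⟨e0, he0⟩ := hSne
    have hlb : j - 1 ≤ nComp S := by
      have h1 := hE e0 he0
      have h2' : nComp (S.erase e0) ≤ nComp (insert e0 (S.erase e0)) + 1 := nComp_insert_le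
      rw [Finset.insert_erase he0] at h2'
      omega
    have hacyc : (graphOf S).IsAcyclic := isAcyclic_of_all_erase hc hE
    have hsum := card_add_nComp_of_acyclic hacyc
    exact ⟨S, by omega, hacyc, hFS⟩
  · rintro ⟨S, hcard, hacyc, rfl⟩
    have hUS : univ \ (univ \ S) = S := by
      rw [Finset.sdiff_sdiff_self_left, Finset.univ_inter]
    have hsum := card_add_nComp_of_acyclic hacyc
    constructor
    · rw [isFace_iff_nComp K hj1 hj, hUS]
      omega
    · intro F' hF' hsub
      by_contra hne
      set S' := univ \ F' with hS'
      have hF'S' : F' = univ \ S' := by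
        rw [hS', Finset.sdiff_sdiff_self_left, Finset.univ_inter]
      have hsub' : S' ⊆ S := by
        rw [hS', ← hUS]
        exact Finset.sdiff_subset_sdiff (le_refl _) hsub
      have hS'ne : S' ≠ S := by
        intro h
        exact hne (by rw [hF'S', h])
      have hc' := (isFace_iff_nComp K hj1 hj F').mp hF'
      rw [← hS'] at hc'
      have hcardlt : S'.card < S.card := Finset.card_lt_card ⟨hsub', fun h => hS'ne (Finset.Subset.antisymm hsub' h)⟩
      have hlow := le_card_add_nComp S'
      omega
end
end

section
/- Let δ = δ_1|…|δ_{k+1} be a (k+1)-partition of {1,…,i}. For each nonempty subset A ⊆ {1,…,k}, let τ_A be the 2-partition of {1,…,i} with parts ∪_{a∈A} δ_a and its complement. Then the cut monomial of δ with respect to K_i satisfies m_δ = lcm({m_{τ_A} : ∅ ≠ A ⊆ {1,…,k}}), a least common multiple of 2^k − 1 cut monomials of 2-partitions. -/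
open MvPolynomial Finset

noncomputable section
open scoped Classical

variable {σ : Type*}

/-- An edge `e` of `K_i` crosses the partition given by the labelling `c` if its endpoints have
different labels. -/
def crossesF {i : ℕ} {α : Type*} (c : Fin i → α) (e : Sym2 (Fin i)) : Prop :=
  ∃ a b, e = s(a, b) ∧ c a ≠ c b

/-- The exponent vector of the cut monomial `m_C = ∏_{e ∈ E(C)} x_e` of the partition of
`{1,…,i}` into the fibres of the labelling `c`, with respect to `K_i`. -/
def cutExpF {i : ℕ} {α : Type*} (c : Fin i → α) : Edge i →₀ ℕ :=
  ∑ e ∈ univ.filter (fun e : Edge i => crossesF c e.val), Finsupp.single e 1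

lemma cutExpF_apply {i : ℕ} {α : Type*} (c : Fin i → α) (x : Edge i) :
    cutExpF c x = if crossesF c x.val then 1 else 0 := by
  classical
  simp only [cutExpF, Finsupp.finset_sum_apply, Finsupp.single_apply]
  rw [Finset.sum_ite_eq' (univ.filter fun e : Edge i => crossesF c e.val) x (fun _ => 1)]
  simp

/-- Let `δ = δ_1|…|δ_{k+1}` be a `(k+1)`-partition of `{1,…,i}` (given by a
surjective labelling `f : Fin i → Fin (k+1)`, so `δ_a` is the fibre of `a`).  For each nonempty
`A ⊆ {1,…,k}`, let `τ_A` be the `2`-partition of `{1,…,i}` with parts `∪_{a∈A} δ_a` and its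
complement.  Then the cut monomial of `δ` with respect to `K_i` satisfies
`m_δ = lcm {m_{τ_A} : ∅ ≠ A ⊆ {1,…,k}}`, a least common multiple of `2^k − 1` cut monomials of
`2`-partitions. -/
theorem cutMon_eq_lcm_two_partitions (K : Type*) [Field K] (i k : ℕ)
    (f : Fin i → Fin (k + 1)) (hf : Function.Surjective f) :
    (univ.filter fun A : Finset (Fin k) => A.Nonempty).card = 2 ^ k - 1 ∧
    (monomial (cutExpF f) 1 : MvPolynomial (Edge i) K) =
      monomial
        ((univ.filter fun A : Finset (Fin k) => A.Nonempty).sup fun A =>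
          cutExpF fun v => ∃ a ∈ A, f v = Fin.castSucc a)
        1 := by
  classical
  constructor
  · have h1 : (univ.filter fun A : Finset (Fin k) => A.Nonempty) = univ.erase ∅ := by
      ext A
      simp [Finset.nonempty_iff_ne_empty, eq_comm]
    rw [h1, Finset.card_erase_of_mem (mem_univ _), Finset.card_univ, Fintype.card_finset,
      Fintype.card_fin]
  · have hsup : ∀ A ∈ (univ.filter fun A : Finset (Fin k) => A.Nonempty),
        (cutExpF fun v => ∃ a ∈ A, f v = Fin.castSucc a) ≤ cutExpF f := by
      intro A _
      rw [Finsupp.le_def]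
      intro e
      rw [cutExpF_apply, cutExpF_apply]
      split_ifs with h1 h2
      · exact le_refl 1
      · exfalso
        obtain ⟨a, b, hab, hne⟩ := h1
        exact h2 ⟨a, b, hab, fun hfab => hne (congrArg (fun t => ∃ a ∈ A, t = Fin.castSucc a) hfab)⟩
      · exact Nat.zero_le _
      · exact le_refl 0
    have hexp : cutExpF f = (univ.filter fun A : Finset (Fin k) => A.Nonempty).sup fun A =>
        cutExpF fun v => ∃ a ∈ A, f v = Fin.castSucc a := by
      ext x
      rw [cutExpF_apply]
      by_cases hc : crossesF f x.val
      · rw [if_pos hc]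
        obtain ⟨a, b, hab, hne⟩ := id hc
        have key : ∃ A : Finset (Fin k), A.Nonempty ∧
            crossesF (fun v => ∃ a ∈ A, f v = Fin.castSucc a) x.val := by
          rcases eq_or_ne (f a) (Fin.last k) with hfa | hfa
          · have hfb : f b ≠ Fin.last k := fun h => hne (by rw [hfa, h])
            obtain ⟨b', hb'⟩ := Fin.exists_castSucc_eq.2 hfb
            refine ⟨{b'}, Finset.singleton_nonempty _, a, b, hab, ?_⟩
            intro h
            have hB : ∃ c ∈ ({b'} : Finset (Fin k)), f b = Fin.castSucc c :=
              ⟨b', Finset.mem_singleton_self _, hb'.symm⟩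
            have h' : (∃ c ∈ ({b'} : Finset (Fin k)), f a = Fin.castSucc c) =
                (∃ c ∈ ({b'} : Finset (Fin k)), f b = Fin.castSucc c) := h
            have hA : ∃ c ∈ ({b'} : Finset (Fin k)), f a = Fin.castSucc c := Eq.mpr h' hB
            obtain ⟨c, hc1, hc2⟩ := hA
            rw [Finset.mem_singleton] at hc1
            subst hc1
            exact hne (hc2.trans hb')
          · obtain ⟨a', ha'⟩ := Fin.exists_castSucc_eq.2 hfa
            refine ⟨{a'}, Finset.singleton_nonempty _, a, b, hab, ?_⟩
            intro h
            have hA : ∃ c ∈ ({a'} : Finset (Fin k)), f a = Fin.castSucc c :=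
              ⟨a', Finset.mem_singleton_self _, ha'.symm⟩
            have h' : (∃ c ∈ ({a'} : Finset (Fin k)), f a = Fin.castSucc c) =
                (∃ c ∈ ({a'} : Finset (Fin k)), f b = Fin.castSucc c) := h
            have hB : ∃ c ∈ ({a'} : Finset (Fin k)), f b = Fin.castSucc c := Eq.mp h' hA
            obtain ⟨c, hc1, hc2⟩ := hB
            rw [Finset.mem_singleton] at hc1
            subst hc1
            exact hne (ha'.symm.trans hc2.symm)
        obtain ⟨A, hA, hcross⟩ := key
        have hmem : A ∈ (univ.filter fun A : Finset (Fin k) => A.Nonempty) := by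
          simp [hA]
        have hle := Finset.le_sup (f := fun A : Finset (Fin k) =>
          cutExpF fun v => ∃ a ∈ A, f v = Fin.castSucc a) hmem
        rw [Finsupp.le_def] at hle
        have h2 := hle x
        rw [cutExpF_apply, if_pos hcross] at h2
        have hge := Finset.sup_le hsup
        rw [Finsupp.le_def] at hge
        have h3 := hge x
        rw [cutExpF_apply, if_pos hc] at h3
        omega
      · rw [if_neg hc]
        have hge := Finset.sup_le hsup
        rw [Finsupp.le_def] at hge
        have h3 := hge x
        rw [cutExpF_apply, if_neg hc] at h3
        omega
    rw [hexp]
end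
end

section
/- For the complete graph K_i and every k ≥ 1 with 2^k − 1 ≤ 2^{i−1} − 1, the ideal P_{i,k+1} generated by the cut monomials of all (k+1)-partitions of {1,…,i} is contained in the (2^k − 1)-fold lcm-ideal I_{i,2^k−1} of the cut ideal I = P_{i,2} of K_i. -/
open MvPolynomial Finset

noncomputable section
open scoped Classical

variable {σ : Type*}

namespace CutAux
variable {i : ℕ}

def expOf (E : Finset (Edge i)) : Edge i →₀ ℕ := ∑ e ∈ E, Finsupp.single e 1

lemma expOf_apply (E : Finset (Edge i)) (e : Edge i) :
    expOf E e = if e ∈ E then 1 else 0 := by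
  classical
  simp [expOf, Finsupp.finset_sum_apply, Finsupp.single_apply]

lemma expOf_injective : Function.Injective (expOf (i := i)) := by
  intro E F h
  ext e
  have := congrArg (fun f => f e) h
  simp only [expOf_apply] at this
  by_cases hE : e ∈ E <;> by_cases hF : e ∈ F <;> simp_all

lemma expOf_sup (E F : Finset (Edge i)) : expOf (E ∪ F) = expOf E ⊔ expOf F := by
  ext e
  rw [Finsupp.sup_apply]
  simp only [expOf_apply, Finset.mem_union]
  by_cases hE : e ∈ E <;> by_cases hF : e ∈ F <;> simp [hE, hF]

lemma sup_expOf {ι : Type*} (s : Finset ι) (E : ι → Finset (Edge i)) :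
    s.sup (fun j => expOf (E j)) = expOf (s.sup E) := by
  classical
  induction s using Finset.cons_induction with
  | empty => simp [expOf]; rfl
  | cons a s ha ih =>
      rw [Finset.sup_cons, Finset.sup_cons, ih, Finset.sup_eq_union, expOf_sup]

lemma mem_cutEdges {P : Finpartition (univ : Finset (Fin i))} {e : Edge i} :
    e ∈ cutEdges P ↔ crosses P e.val := by simp [cutEdges]

lemma cutExp_eq (P : Finpartition (univ : Finset (Fin i))) :
    cutExp P = expOf (cutEdges P) := rfl

lemma crosses_mk (P : Finpartition (univ : Finset (Fin i))) (v w : Fin i) :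
    crosses P s(v, w) ↔ ∀ t ∈ P.parts, ¬(v ∈ t ∧ w ∈ t) := by
  simp [crosses, Sym2.mem_iff, forall_eq_or_imp]

lemma crosses_iff_part_ne (P : Finpartition (univ : Finset (Fin i))) (v w : Fin i) :
    crosses P s(v, w) ↔ P.part v ≠ P.part w := by
  rw [crosses_mk]
  constructor
  · intro h hpart
    exact h (P.part v) (P.part_mem.mpr (mem_univ v))
      ⟨P.mem_part (mem_univ v), hpart ▸ P.mem_part (mem_univ w)⟩
  · intro h t ht ⟨hv, hw⟩
    exact h ((P.part_eq_of_mem ht hv).trans (P.part_eq_of_mem ht hw).symm)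

def twoPart (A : Finset (Fin i)) (h1 : A.Nonempty) (h2 : (univ \ A).Nonempty) :
    Finpartition (univ : Finset (Fin i)) where
  parts := {A, univ \ A}
  supIndep := by
    have hne : A ≠ univ \ A := by
      obtain ⟨a, ha⟩ := h1
      intro h
      exact (Finset.mem_sdiff.mp (h ▸ ha)).2 ha
    rw [Finset.supIndep_pair hne]
    exact disjoint_sdiff
  sup_parts := by
    simp only [Finset.sup_insert, Finset.sup_singleton, id]
    exact Finset.union_sdiff_of_subset (subset_univ A)
  bot_notMem := by
    simp only [Finset.bot_eq_empty, Finset.mem_insert, Finset.mem_singleton]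
    push_neg
    exact ⟨Ne.symm h1.ne_empty, Ne.symm h2.ne_empty⟩

lemma twoPart_card (A : Finset (Fin i)) (h1 h2) :
    (twoPart A h1 h2).parts.card = 2 := by
  have hne : A ≠ univ \ A := by
    obtain ⟨a, ha⟩ := h1
    intro h
    exact (Finset.mem_sdiff.mp (h ▸ ha)).2 ha
  exact Finset.card_pair hne

lemma crosses_twoPart (A : Finset (Fin i)) (h1 h2) (v w : Fin i) :
    crosses (twoPart A h1 h2) s(v, w) ↔ ¬(v ∈ A ↔ w ∈ A) := by
  rw [crosses_mk]
  have hparts : (twoPart A h1 h2).parts = {A, univ \ A} := rfl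
  rw [hparts]
  simp only [Finset.mem_insert, Finset.mem_singleton]
  constructor
  · intro h hiff
    by_cases hv : v ∈ A
    · exact h A (Or.inl rfl) ⟨hv, hiff.mp hv⟩
    · exact h (univ \ A) (Or.inr rfl) ⟨Finset.mem_sdiff.mpr ⟨mem_univ v, hv⟩,
        Finset.mem_sdiff.mpr ⟨mem_univ w, fun hw => hv (hiff.mpr hw)⟩⟩
  · rintro h t (rfl | rfl) ⟨hv, hw⟩
    · exact h ⟨fun _ => hw, fun _ => hv⟩
    · rw [Finset.mem_sdiff] at hv hw
      exact h ⟨fun hv' => absurd hv' hv.2, fun hw' => absurd hw' hw.2⟩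

/-- The crossing edges of the 2-partition `{A, univ \ A}`, as a function of `A` alone. -/
def cutA (A : Finset (Fin i)) : Finset (Edge i) :=
  univ.filter fun e => (∃ v ∈ e.val, v ∈ A) ∧ (∃ w ∈ e.val, w ∉ A)

lemma mem_cutA {A : Finset (Fin i)} {v w : Fin i} (h : ¬(s(v, w) : Sym2 (Fin i)).IsDiag) :
    (⟨s(v, w), h⟩ : Edge i) ∈ cutA A ↔ ¬(v ∈ A ↔ w ∈ A) := by
  simp only [cutA, Finset.mem_filter, mem_univ, true_and, Sym2.mem_iff]
  constructor
  · rintro ⟨⟨a, (rfl | rfl), ha⟩, ⟨b, (rfl | rfl), hb⟩⟩ hiff <;> tauto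
  · intro hiff
    by_cases hv : v ∈ A
    · exact ⟨⟨v, Or.inl rfl, hv⟩, ⟨w, Or.inr rfl, fun hw => hiff ⟨fun _ => hw, fun _ => hv⟩⟩⟩
    · refine ⟨⟨w, Or.inr rfl, ?_⟩, ⟨v, Or.inl rfl, hv⟩⟩
      by_contra hw
      exact hiff ⟨fun h' => absurd h' hv, fun h' => absurd h' hw⟩

lemma cutEdges_twoPart (A : Finset (Fin i)) (h1 h2) :
    cutEdges (twoPart A h1 h2) = cutA A := by
  ext e
  obtain ⟨e, he⟩ := e
  revert he
  induction e using Sym2.ind with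
  | _ v w =>
      intro he
      rw [mem_cutEdges, mem_cutA he]
      exact crosses_twoPart A h1 h2 v w

lemma mem_cutGens {j : ℕ} {μ : Edge i →₀ ℕ} :
    μ ∈ cutGens i j ↔
      ∃ P : Finpartition (univ : Finset (Fin i)), P.parts.card = j ∧ cutExp P = μ := by
  simp [cutGens, Set.Finite.mem_toFinset, Set.mem_image, Set.mem_setOf_eq]

lemma key {k : ℕ} (hk : 1 ≤ k) (P : Finpartition (univ : Finset (Fin i)))
    (hP : P.parts.card = k + 1) :
    cutExp P ∈ lcmFoldGens (cutGens i 2) (2 ^ k - 1) := by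
  classical
  have hone : P.parts.Nonempty := Finset.card_pos.mp (by omega)
  obtain ⟨A0, hA0⟩ := hone
  obtain ⟨v0, hv0⟩ := P.nonempty_of_mem_parts hA0
  have hv0univ : (v0 : Fin i) ∈ (univ : Finset (Fin i)) := mem_univ v0
  have hpartv0 : P.part v0 = A0 := P.part_eq_of_mem hA0 hv0
  set R := P.parts.erase A0 with hR
  have hRcard : R.card = k := by
    rw [hR, Finset.card_erase_of_mem hA0, hP]
    omega
  set 𝒮 := R.powerset.erase ∅ with h𝒮
  have h𝒮card : 𝒮.card = 2 ^ k - 1 := by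
    rw [h𝒮, Finset.card_erase_of_mem (Finset.mem_powerset.mpr (Finset.empty_subset _)),
      Finset.card_powerset, hRcard]
  -- basic facts about S ∈ 𝒮
  have hmem𝒮 : ∀ S : Finset (Finset (Fin i)), S ∈ 𝒮 ↔ S ⊆ R ∧ S ≠ ∅ := by
    intro S
    rw [h𝒮, Finset.mem_erase, Finset.mem_powerset]
    tauto
  have hsub : ∀ S ∈ 𝒮, S ⊆ P.parts := fun S hS =>
    ((hmem𝒮 S).mp hS).1.trans (Finset.erase_subset _ _)
  have hmemA : ∀ S ∈ 𝒮, ∀ v : Fin i, v ∈ S.sup id ↔ P.part v ∈ S := by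
    intro S hS v
    rw [Finset.mem_sup]
    constructor
    · rintro ⟨t, ht, hvt⟩
      rwa [P.part_eq_of_mem (hsub S hS ht) hvt]
    · intro h
      exact ⟨P.part v, h, P.mem_part (mem_univ v)⟩
  have hA0notin : ∀ S ∈ 𝒮, A0 ∉ S := fun S hS h =>
    (Finset.mem_erase.mp (((hmem𝒮 S).mp hS).1 h)).1 rfl
  have hv0notin : ∀ S ∈ 𝒮, v0 ∉ S.sup id := by
    intro S hS h
    rw [hmemA S hS, hpartv0] at h
    exact hA0notin S hS h
  have hAne : ∀ S ∈ 𝒮, (S.sup id : Finset (Fin i)).Nonempty := by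
    intro S hS
    obtain ⟨t, ht⟩ := Finset.nonempty_iff_ne_empty.mpr ((hmem𝒮 S).mp hS).2
    obtain ⟨v, hv⟩ := P.nonempty_of_mem_parts (hsub S hS ht)
    exact ⟨v, Finset.mem_sup.mpr ⟨t, ht, hv⟩⟩
  have hAcone : ∀ S ∈ 𝒮, (univ \ S.sup id : Finset (Fin i)).Nonempty := by
    intro S hS
    exact ⟨v0, Finset.mem_sdiff.mpr ⟨mem_univ v0, hv0notin S hS⟩⟩
  -- the set of generators
  set T := 𝒮.image (fun S => expOf (cutA (S.sup id))) with hT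
  -- each element of T is a cut exponent of a 2-partition
  have hTsub : T ⊆ cutGens i 2 := by
    intro μ hμ
    rw [hT, Finset.mem_image] at hμ
    obtain ⟨S, hS, rfl⟩ := hμ
    rw [mem_cutGens]
    exact ⟨twoPart (S.sup id) (hAne S hS) (hAcone S hS),
      twoPart_card _ _ _,
      by rw [cutExp_eq, cutEdges_twoPart]⟩
  -- injectivity
  have hinj : Set.InjOn (fun S : Finset (Finset (Fin i)) => expOf (cutA (S.sup id))) ↑𝒮 := by
    intro S hS S' hS' h
    have hcut : cutA (S.sup id) = cutA (S'.sup id) := expOf_injective h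
    -- first, S.sup id = S'.sup id
    have hsupeq : (S.sup id : Finset (Fin i)) = S'.sup id := by
      have main : ∀ S ∈ 𝒮, ∀ S' ∈ 𝒮, cutA (S.sup id) = cutA (S'.sup id) →
          (S.sup id : Finset (Fin i)) ⊆ S'.sup id := by
        intro S hS S' hS' hcut v hv
        have hvne : v ≠ v0 := fun h => hv0notin S hS (h ▸ hv)
        have hdiag : ¬(s(v, v0) : Sym2 (Fin i)).IsDiag := by
          rw [Sym2.mk_isDiag_iff]; exact hvne
        have h1 : (⟨s(v, v0), hdiag⟩ : Edge i) ∈ cutA (S.sup id) := by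
          rw [mem_cutA hdiag]
          intro hiff
          exact hv0notin S hS (hiff.mp hv)
        rw [hcut, mem_cutA hdiag] at h1
        by_contra hv'
        exact h1 ⟨fun h' => absurd h' hv', fun h' => absurd h' (hv0notin S' hS')⟩
      exact Finset.Subset.antisymm (main S hS S' hS' hcut) (main S' hS' S hS hcut.symm)
    -- then S = S'
    ext t
    constructor
    · intro ht
      obtain ⟨u, hu⟩ := P.nonempty_of_mem_parts (hsub S hS ht)
      have : u ∈ S.sup id := Finset.mem_sup.mpr ⟨t, ht, hu⟩
      rw [hsupeq, hmemA S' hS', P.part_eq_of_mem (hsub S hS ht) hu] at this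
      exact this
    · intro ht
      obtain ⟨u, hu⟩ := P.nonempty_of_mem_parts (hsub S' hS' ht)
      have : u ∈ S'.sup id := Finset.mem_sup.mpr ⟨t, ht, hu⟩
      rw [← hsupeq, hmemA S hS, P.part_eq_of_mem (hsub S' hS' ht) hu] at this
      exact this
  have hTcard : T.card = 2 ^ k - 1 := by
    rw [hT, Finset.card_image_of_injOn hinj, h𝒮card]
  -- the sup of T is cutExp P
  have hsup : T.sup id = cutExp P := by
    rw [hT, Finset.sup_image]
    rw [show (id ∘ fun S : Finset (Finset (Fin i)) => expOf (cutA (S.sup id)))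
        = fun S : Finset (Finset (Fin i)) => expOf (cutA (S.sup id)) from rfl,
      sup_expOf, cutExp_eq]
    congr 1
    ext e
    obtain ⟨e, he⟩ := e
    revert he
    induction e using Sym2.ind with
    | _ v w =>
        intro he
        have hvw : v ≠ w := by rwa [Sym2.mk_isDiag_iff] at he
        rw [Finset.mem_sup, mem_cutEdges]
        simp only [crosses_iff_part_ne]
        constructor
        · rintro ⟨S, hS, hmem⟩
          rw [mem_cutA he] at hmem
          intro hpeq
          rw [hmemA S hS, hmemA S hS, hpeq] at hmem
          exact hmem Iff.rfl
        · intro hne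
          by_cases hv : P.part v = A0
          · have hw : P.part w ∈ R := Finset.mem_erase.mpr
              ⟨fun h => hne (hv.trans h.symm), P.part_mem.mpr (mem_univ w)⟩
            have hS : ({P.part w} : Finset (Finset (Fin i))) ∈ 𝒮 := by
              rw [hmem𝒮]
              exact ⟨Finset.singleton_subset_iff.mpr hw, Finset.singleton_ne_empty _⟩
            refine ⟨{P.part w}, hS, ?_⟩
            rw [mem_cutA he, hmemA _ hS, hmemA _ hS]
            simp only [Finset.mem_singleton]
            tauto
          · have hvR : P.part v ∈ R := Finset.mem_erase.mpr ⟨hv, P.part_mem.mpr (mem_univ v)⟩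
            have hS : ({P.part v} : Finset (Finset (Fin i))) ∈ 𝒮 := by
              rw [hmem𝒮]
              exact ⟨Finset.singleton_subset_iff.mpr hvR, Finset.singleton_ne_empty _⟩
            refine ⟨{P.part v}, hS, ?_⟩
            rw [mem_cutA he, hmemA _ hS, hmemA _ hS]
            simp only [Finset.mem_singleton]
            tauto
  -- conclude
  simp only [lcmFoldGens, Finset.mem_image]
  exact ⟨T, Finset.mem_powersetCard.mpr ⟨hTsub, hTcard⟩, hsup⟩

end CutAux

/-- For the complete graph `K_i` and every `k ≥ 1` with
`2^k − 1 ≤ 2^{i−1} − 1`, the ideal `P_{i,k+1}` generated by the cut monomials of all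
`(k+1)`-partitions of `{1,…,i}` is contained in the `(2^k − 1)`-fold lcm-ideal `I_{i,2^k−1}` of
the cut ideal `I = P_{i,2}` of `K_i` (whose minimal monomial generating set is the set of cut
monomials of the `2`-partitions). -/
theorem Pij_le_lcmFold (K : Type*) [Field K] (i k : ℕ) (hk : 1 ≤ k)
    (hbound : 2 ^ k - 1 ≤ 2 ^ (i - 1) - 1) :
    Pij K i (k + 1) ≤ lcmFoldIdeal K (cutGens i 2) (2 ^ k - 1) := by
  classical
  rw [Pij, lcmFoldIdeal, monIdeal, monIdeal, Ideal.span_le]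
  rintro x ⟨μ, hμ, rfl⟩
  apply Ideal.subset_span
  refine ⟨μ, ?_, rfl⟩
  obtain ⟨P, hP, rfl⟩ := CutAux.mem_cutGens.mp (Finset.mem_coe.mp hμ)
  exact Finset.mem_coe.mpr (CutAux.key hk P hP)
end
end

section
/- Let C and C' be two distinct j-partitions of {1,…,i}. Then their cut monomials with respect to the complete graph K_i are incomparable under divisibility: m_C does not divide m_{C'} and m_{C'} does not divide m_C. Equivalently, E(C) ⊆ E(C') implies C = C' for j-partitions C, C'. -/
open MvPolynomial Finset

noncomputable section
open scoped Classical

variable {σ : Type*}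

-- refinement
lemma refines_of_subset {i : ℕ} {C C' : Finpartition (univ : Finset (Fin i))}
    (h : cutEdges C ⊆ cutEdges C') : C' ≤ C := by
  intro t' ht'
  obtain ⟨a, ha⟩ := C'.nonempty_of_mem_parts ht'
  refine ⟨C.part a, C.part_mem.mpr (mem_univ a), fun b hb => ?_⟩
  by_cases hab : b = a
  · subst hab; exact C.mem_part (mem_univ b)
  · have hd : ¬ (s(a, b) : Sym2 (Fin i)).IsDiag := by
      simp [Sym2.isDiag_iff_proj_eq, Ne.symm hab]
    have hnc' : (⟨s(a,b), hd⟩ : Edge i) ∉ cutEdges C' := by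
      simp only [cutEdges, mem_filter, mem_univ, true_and, Finset.mem_filter_univ, crosses, Set.mem_setOf_eq, imp_false, not_not]
      exact fun hh => ((Finset.mem_filter (p := fun e : Edge i => crosses C' e.val)).mp hh).2 ⟨t', ht', by rintro v hv; rcases Sym2.mem_iff.mp hv with rfl | rfl <;> assumption⟩
    have hnc : (⟨s(a,b), hd⟩ : Edge i) ∉ cutEdges C := fun hh => hnc' (h hh)
    simp only [cutEdges, mem_filter, mem_univ, true_and, Finset.mem_filter_univ, crosses, Set.mem_setOf_eq, imp_false, not_not] at hnc
    obtain ⟨t, ht, hv⟩ : ∃ t ∈ C.parts, ∀ v ∈ (s(a,b) : Sym2 (Fin i)), v ∈ t := by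
      by_contra hc; exact hnc ((Finset.mem_filter (p := fun e : Edge i => crosses C e.val)).mpr ⟨mem_univ _, hc⟩)
    have hat : a ∈ t := hv a (by simp)
    have hbt : b ∈ t := hv b (by simp)
    rwa [C.part_eq_of_mem ht hat]

lemma eq_of_le_of_card_eq {i : ℕ} {P Q : Finpartition (univ : Finset (Fin i))}
    (h : P ≤ Q) (hcard : #Q.parts = #P.parts) : P = Q := by
  classical
  choose! f hf1 hf2 using h
  set g : Finset (Fin i) → Finset (Fin i) := f with hg
  have himg : P.parts.image g = Q.parts := by
    apply Subset.antisymm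
    · intro u hu
      obtain ⟨t, ht, rfl⟩ := mem_image.mp hu
      exact hf1 ht
    · intro u hu
      obtain ⟨x, hx⟩ := Q.nonempty_of_mem_parts hu
      have ht : P.part x ∈ P.parts := P.part_mem.mpr (mem_univ x)
      have hxg : x ∈ g (P.part x) := hf2 ht (P.mem_part (mem_univ x))
      have : g (P.part x) = u := Q.eq_of_mem_parts (hf1 ht) hu hxg hx
      exact mem_image.mpr ⟨P.part x, ht, this⟩
  have hinj : Set.InjOn g P.parts := by
    apply injOn_of_card_image_eq
    rw [himg, hcard]
  have hQP : Q.parts ⊆ P.parts := by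
    intro u hu
    obtain ⟨t₀, ht₀, hgt₀⟩ := mem_image.mp (himg ▸ hu)
    have hsub : u ⊆ t₀ := by
      intro x hx
      have ht : P.part x ∈ P.parts := P.part_mem.mpr (mem_univ x)
      have hxg : x ∈ g (P.part x) := hf2 ht (P.mem_part (mem_univ x))
      have heq : g (P.part x) = u := Q.eq_of_mem_parts (hf1 ht) hu hxg hx
      have : P.part x = t₀ := hinj ht ht₀ (heq.trans hgt₀.symm)
      exact this ▸ P.mem_part (mem_univ x)
    have : u = t₀ := Subset.antisymm hsub (hgt₀ ▸ hf2 ht₀)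
    exact this ▸ ht₀
  exact (Finpartition.ext (eq_of_subset_of_card_le hQP hcard.ge).symm)

lemma subset_of_cutMon_dvd (K : Type*) [Field K] {i : ℕ}
    {C C' : Finpartition (univ : Finset (Fin i))}
    (h : cutMon K C ∣ cutMon K C') : cutEdges C ⊆ cutEdges C' := by
  rw [cutMon, cutMon, monomial_dvd_monomial] at h
  have hle : cutExp C ≤ cutExp C' := by
    rcases h.1 with h0 | h1
    · exact absurd h0 one_ne_zero
    · exact h1
  intro e he
  have := hle e
  rw [cutExp_apply, cutExp_apply, if_pos he] at this
  by_contra hne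
  rw [if_neg hne] at this
  omega


/-- Let `C` and `C'` be two `j`-partitions of `{1,…,i}`.  If they are distinct,
then their cut monomials with respect to the complete graph `K_i` are incomparable under
divisibility: `m_C ∤ m_{C'}` and `m_{C'} ∤ m_C`.  Equivalently, `E(C) ⊆ E(C')` implies `C = C'`. -/
theorem cutMon_incomparable (K : Type*) [Field K] (i j : ℕ)
    (C C' : Finpartition (univ : Finset (Fin i)))
    (hC : C.parts.card = j) (hC' : C'.parts.card = j) :
    (C ≠ C' → ¬ cutMon K C ∣ cutMon K C' ∧ ¬ cutMon K C' ∣ cutMon K C) ∧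
      (cutEdges C ⊆ cutEdges C' → C = C') := by
  have key : ∀ A B : Finpartition (univ : Finset (Fin i)),
      A.parts.card = B.parts.card → cutEdges A ⊆ cutEdges B → A = B := by
    intro A B hc hsub
    exact (eq_of_le_of_card_eq (refines_of_subset hsub) hc).symm
  constructor
  · intro hne
    constructor
    · intro hdvd
      exact hne (key C C' (hC.trans hC'.symm) (subset_of_cutMon_dvd K hdvd))
    · intro hdvd
      exact hne ((key C' C (hC'.trans hC.symm) (subset_of_cutMon_dvd K hdvd))).symm
  · exact key C C' (hC.trans hC'.symm)
end
end
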